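/- arXiv:1503.07980 — 9 statements merged into one kernel-verified Lean document; each statement's English description precedes it below -/
import Mathlib

section
/- An m×m complex matrix A is a commutator, i.e., there exist m×m matrices B, C with A = BC - CB, if and only if A has trace zero. -/
/-!
Over a field of characteristic zero, a trace-zero matrix `A` is similar to one with zero
diagonal. If every `v` is collinear with `A v`, then `A` is scalar and hence `0`. Otherwise pick
`v` with `v, A v` independent: in a basis containing both, with `v` at index `i₀`, the entry
`(i₀, i₀)` vanishes, and the complementary block still has trace zero, so induction applies to
it. A matrix `X` with zero diagonal is the commutator `D Y - Y D` with `D = diagonal d` for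
pairwise distinct `d i` and `Y i j = X i j / (d i - d j)`.
-/

open Module

theorem exists_eq_commutator_of_isConj {R : Type*} [Ring R] {a b : R} (hab : IsConj a b)
    (hb : ∃ x y : R, b = x * y - y * x) : ∃ x y : R, a = x * y - y * x := by
  obtain ⟨c, hc⟩ := hab
  obtain ⟨x, y, rfl⟩ := hb
  have ha : a = ↑c⁻¹ * (x * y - y * x) * ↑c := by
    rw [mul_assoc, ← hc.eq, Units.inv_mul_cancel_left]
  refine ⟨↑c⁻¹ * x * ↑c, ↑c⁻¹ * y * ↑c, ?_⟩
  simp only [ha, mul_sub, sub_mul, mul_assoc, Units.mul_inv_cancel_left]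

namespace Matrix

variable {ι κ : Type*} [Fintype ι] [Fintype κ]

theorem trace_fromBlocks {R : Type*} [AddCommMonoid R] (A : Matrix ι ι R) (B : Matrix ι κ R)
    (C : Matrix κ ι R) (D : Matrix κ κ R) : (fromBlocks A B C D).trace = A.trace + D.trace := by
  simp [trace, Fintype.sum_sum_type]

theorem trace_reindex {R : Type*} [AddCommMonoid R] (e : ι ≃ κ) (A : Matrix ι ι R) :
    (reindex e e A).trace = A.trace := by
  simp [trace, e.symm.sum_comp (fun i => A i i)]

variable [DecidableEq ι] [DecidableEq κ]

theorem trace_eq_of_isConj {R : Type*} [CommSemiring R] {A B : Matrix ι ι R} (h : IsConj A B) :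
    A.trace = B.trace := by
  obtain ⟨c, hc⟩ := h
  rw [← trace_units_conj c A, hc.eq, mul_assoc, Units.mul_inv, mul_one]

theorem isConj_toMatrix_toLin' {R : Type*} [CommSemiring R] (c : Basis ι R (ι → R))
    (A : Matrix ι ι R) : IsConj A (LinearMap.toMatrix c c (toLin' A)) := by
  let std := Pi.basisFun R ι
  refine ⟨⟨c.toMatrix std, std.toMatrix c, c.toMatrix_mul_toMatrix_flip std,
    std.toMatrix_mul_toMatrix_flip c⟩, ?_⟩
  have h := basis_toMatrix_mul_linearMap_toMatrix_mul_basis_toMatrix c std c std (toLin' A)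
  rw [LinearMap.toMatrix_eq_toMatrix', LinearMap.toMatrix'_toLin'] at h
  rw [SemiconjBy, Units.val_mk, ← h, mul_assoc _ (std.toMatrix c),
    std.toMatrix_mul_toMatrix_flip, mul_one]

theorem exists_isConj_diag_eq_zero_of_reindex {R : Type*} [CommSemiring R] (e : ι ≃ κ)
    {A : Matrix ι ι R} (h : ∃ B, IsConj (reindex e e A) B ∧ B.diag = 0) :
    ∃ B, IsConj A B ∧ B.diag = 0 := by
  obtain ⟨B, hAB, hB⟩ := h
  refine ⟨reindex e.symm e.symm B, ?_, by simp [diag_submatrix, hB]⟩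
  simpa using (reindexAlgEquiv R R e.symm).toMonoidHom.map_isConj hAB

theorem exists_isConj_diag_eq_zero_of_toBlocks {R : Type*} [Semiring R]
    {M : Matrix (ι ⊕ κ) (ι ⊕ κ) R} (h₁ : ∃ B, IsConj M.toBlocks₁₁ B ∧ B.diag = 0)
    (h₂ : ∃ B, IsConj M.toBlocks₂₂ B ∧ B.diag = 0) : ∃ B, IsConj M B ∧ B.diag = 0 := by
  obtain ⟨B₁, ⟨c₁, hc₁⟩, hB₁⟩ := h₁
  obtain ⟨B₂, ⟨c₂, hc₂⟩, hB₂⟩ := h₂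
  let c : (Matrix (ι ⊕ κ) (ι ⊕ κ) R)ˣ :=
    ⟨fromBlocks c₁ 0 0 c₂, fromBlocks ↑c₁⁻¹ 0 0 ↑c₂⁻¹,
      by simp [fromBlocks_multiply], by simp [fromBlocks_multiply]⟩
  refine ⟨fromBlocks B₁ ((c₁ : Matrix ι ι R) * M.toBlocks₁₂ * (↑c₂⁻¹ : Matrix κ κ R))
    ((c₂ : Matrix κ κ R) * M.toBlocks₂₁ * (↑c₁⁻¹ : Matrix ι ι R)) B₂, ⟨c, ?_⟩, ?_⟩
  · conv_lhs => rw [← fromBlocks_toBlocks M]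
    simp [c, SemiconjBy, fromBlocks_multiply, hc₁.eq, hc₂.eq, Matrix.mul_assoc]
  · ext (i | i)
    · exact congrFun hB₁ i
    · exact congrFun hB₂ i

variable {K : Type*} [Field K]

theorem exists_eq_commutator_of_diag_eq_zero [CharZero K] {A : Matrix ι ι K} (hA : A.diag = 0) :
    ∃ B C : Matrix ι ι K, A = B * C - C * B := by
  let d : ι → K := fun i => (Fintype.equivFin ι i : ℕ)
  have hd : d.Injective := fun i j h =>
    (Fintype.equivFin ι).injective (Fin.ext (Nat.cast_injective h))
  -- on the diagonal `0 / 0 = 0`, which matches `A i i = 0`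
  refine ⟨diagonal d, of fun i j => A i j / (d i - d j), ?_⟩
  ext i j
  rw [sub_apply, diagonal_mul, mul_diagonal, of_apply, mul_comm (d i), ← mul_sub]
  rcases eq_or_ne i j with rfl | hij
  · simpa using congrFun hA i
  · rw [div_mul_cancel₀ _ (sub_ne_zero.mpr (hd.ne hij))]

theorem eq_zero_of_trace_eq_zero_of_forall_not_linearIndependent [CharZero K] [Nonempty ι]
    {A : Matrix ι ι K} (hA : A.trace = 0) (h : ∀ v, ¬ LinearIndependent K ![v, A *ᵥ v]) :
    A = 0 := by
  obtain ⟨a, ha⟩ := LinearMap.exists_eq_smul_id_of_forall_notLinearIndependent (f := toLin' A) h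
  have hA' : A = a • 1 := by
    rw [← LinearMap.toMatrix'_toLin' A, ha]
    simp
  rw [hA', trace_smul, trace_one, smul_eq_mul, mul_eq_zero] at hA
  simpa [hA', Fintype.card_ne_zero] using hA

theorem exists_isConj_apply_eq_zero_of_linearIndependent {A : Matrix ι ι K} {v : ι → K}
    (hv : LinearIndependent K ![v, A *ᵥ v]) (i₀ : ι) : ∃ B, IsConj A B ∧ B i₀ i₀ = 0 := by
  have hs : LinearIndepOn K id (Set.range ![v, A *ᵥ v]) :=
    (linearIndepOn_id_range_iff hv.injective).mpr hv
  let b := Basis.extend hs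
  let v' : hs.extend (Set.subset_univ _) := ⟨v, hs.subset_extend _ ⟨0, rfl⟩⟩
  let Av' : hs.extend (Set.subset_univ _) := ⟨A *ᵥ v, hs.subset_extend _ ⟨1, rfl⟩⟩
  let e₀ := b.indexEquiv (Pi.basisFun K ι)
  let e := e₀.trans (Equiv.swap (e₀ v') i₀)
  let c := b.reindex e
  have hc (x) : c (e x) = x := by simp [c, b]
  have hv' : e v' = i₀ := by simp [e]
  have hne : e Av' ≠ i₀ := by
    rw [← hv', e.injective.ne_iff, Ne, Subtype.ext_iff]
    exact hv.injective.ne (by decide : (1 : Fin 2) ≠ 0)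
  have hAv : toLin' A (c i₀) = c (e Av') := by
    rw [← hv', hc, hc, toLin'_apply]
  refine ⟨LinearMap.toMatrix c c (toLin' A), isConj_toMatrix_toLin' c A, ?_⟩
  rw [LinearMap.toMatrix_apply, hAv, c.repr_self, Finsupp.single_eq_of_ne hne.symm]

theorem exists_isConj_diag_eq_zero_of_trace_eq_zero_fin [CharZero K] :
    ∀ {n : ℕ} (A : Matrix (Fin n) (Fin n) K), A.trace = 0 → ∃ B, IsConj A B ∧ B.diag = 0
  | 0, A, _ => ⟨A, .refl A, Subsingleton.elim _ _⟩
  | n + 1, A, hA => by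
    by_cases hA₀ : ∀ v, ¬ LinearIndependent K ![v, A *ᵥ v]
    · rw [eq_zero_of_trace_eq_zero_of_forall_not_linearIndependent hA hA₀]
      exact ⟨0, .refl 0, diag_zero⟩
    push Not at hA₀
    obtain ⟨v, hv⟩ := hA₀
    let e : Fin n ⊕ Fin 1 ≃ Fin (n + 1) := finSumFinEquiv
    obtain ⟨M, hAM, hM⟩ := exists_isConj_apply_eq_zero_of_linearIndependent hv (e (.inr 0))
    let M' := reindex e.symm e.symm M
    have h₂₂ : M'.toBlocks₂₂.diag = 0 := by
      ext i
      rw [Subsingleton.elim i 0]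
      exact hM
    have h₁₁ : M'.toBlocks₁₁.trace = 0 := by
      have h := trace_fromBlocks M'.toBlocks₁₁ M'.toBlocks₁₂ M'.toBlocks₂₁ M'.toBlocks₂₂
      have h₀ : M'.toBlocks₂₂.trace = 0 := by
        simp only [trace, h₂₂, Pi.zero_apply, Finset.sum_const_zero]
      rw [fromBlocks_toBlocks, trace_reindex, ← trace_eq_of_isConj hAM, hA, h₀, add_zero] at h
      exact h.symm
    obtain ⟨B, hMB, hB⟩ := exists_isConj_diag_eq_zero_of_reindex e.symm
      (exists_isConj_diag_eq_zero_of_toBlocks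
        (exists_isConj_diag_eq_zero_of_trace_eq_zero_fin _ h₁₁) ⟨_, .refl _, h₂₂⟩)
    exact ⟨B, hAM.trans hMB, hB⟩

theorem exists_isConj_diag_eq_zero_of_trace_eq_zero [CharZero K] {A : Matrix ι ι K}
    (hA : A.trace = 0) : ∃ B, IsConj A B ∧ B.diag = 0 :=
  exists_isConj_diag_eq_zero_of_reindex (Fintype.equivFin ι)
    (exists_isConj_diag_eq_zero_of_trace_eq_zero_fin _ (by rwa [trace_reindex]))

theorem exists_eq_commutator_iff_trace_eq_zero [CharZero K] (A : Matrix ι ι K) :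
    (∃ B C : Matrix ι ι K, A = B * C - C * B) ↔ A.trace = 0 := by
  constructor
  · rintro ⟨B, C, rfl⟩
    rw [trace_sub, trace_mul_comm, sub_self]
  · intro hA
    obtain ⟨B, hAB, hB⟩ := exists_isConj_diag_eq_zero_of_trace_eq_zero hA
    exact exists_eq_commutator_of_isConj hAB (exists_eq_commutator_of_diag_eq_zero hB)

end Matrix

/-- An m×m complex matrix is a commutator iff it has trace zero. -/
theorem stmt1 {m : ℕ} (A : Matrix (Fin m) (Fin m) ℂ) :
    (∃ B C : Matrix (Fin m) (Fin m) ℂ, A = B * C - C * B) ↔ A.trace = 0 :=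
  A.exists_eq_commutator_iff_trace_eq_zero
end

section
/- Every m×m complex matrix with zero trace is unitarily equivalent to a matrix all of whose diagonal entries are zero; that is, if tr(A) = 0 then there exists a unitary U such that U*AU has zero diagonal. -/
/-!
The numerical range `{⟪x, A x⟫ : ‖x‖ = 1}` of a complex operator is convex (Toeplitz–Hausdorff),
so it contains the average `tr A / m` of the diagonal entries, which is `0`. A unit vector `x`
with `⟪x, A x⟫ = 0` is the first vector of the required orthonormal basis; the rest comes by
induction from the compression of `A` to `xᗮ`, whose trace is still `0`.
-/

open Module
open scoped InnerProductSpace ComplexConjugate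

namespace Submodule

variable {𝕜 E : Type*} [RCLike 𝕜] [NormedAddCommGroup E] [InnerProductSpace 𝕜 E]

noncomputable def compression (K : Submodule 𝕜 E) [K.HasOrthogonalProjection] (T : E →ₗ[𝕜] E) :
    K →ₗ[𝕜] K :=
  K.orthogonalProjectionOnto.toLinearMap ∘ₗ T ∘ₗ K.subtype

lemma inner_compression_apply (K : Submodule 𝕜 E) [K.HasOrthogonalProjection]
    (T : E →ₗ[𝕜] E) (x y : K) : ⟪x, K.compression T y⟫_𝕜 = ⟪(x : E), T y⟫_𝕜 := by
  simp [compression]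

end Submodule

namespace OrthonormalBasis

variable {𝕜 E : Type*} [RCLike 𝕜] [NormedAddCommGroup E] [InnerProductSpace 𝕜 E]
  [FiniteDimensional 𝕜 E]

lemma exists_eq_fin_cons {n : ℕ} {x : E} (hx : ‖x‖ = 1)
    (c : OrthonormalBasis (Fin n) 𝕜 (𝕜 ∙ x)ᗮ) :
    ∃ b : OrthonormalBasis (Fin (n + 1)) 𝕜 E, ⇑b = Fin.cons x (fun j => (c j : E)) := by
  have hon : Orthonormal 𝕜 (Fin.cons x (fun j => (c j : E)) : Fin (n + 1) → E) := by
    rw [orthonormal_iff_ite]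
    have hxc : ∀ j, ⟪x, (c j : E)⟫_𝕜 = 0 := fun j =>
      Submodule.mem_orthogonal_singleton_iff_inner_right.1 (c j).2
    intro i j
    cases i using Fin.cases <;> cases j using Fin.cases
    · simp [inner_self_eq_norm_sq_to_K, hx]
    · simp [hxc, (Fin.succ_ne_zero _).symm]
    · simp [inner_eq_zero_symm.1 (hxc _), Fin.succ_ne_zero]
    · simp only [Fin.cons_succ, Fin.succ_inj, ← Submodule.coe_inner]
      exact orthonormal_iff_ite.1 c.orthonormal _ _
  have hx0 : x ≠ 0 := by rintro rfl; simp at hx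
  have hcard : Fintype.card (Fin (n + 1)) = finrank 𝕜 E := by
    rw [← Submodule.finrank_add_finrank_orthogonal (𝕜 ∙ x), finrank_span_singleton hx0,
      finrank_eq_card_basis c.toBasis]
    simp [add_comm]
  exact ⟨OrthonormalBasis.mk hon (hon.linearIndependent.span_eq_top_of_card_eq_finrank' hcard).ge,
    OrthonormalBasis.coe_mk _ _⟩

end OrthonormalBasis

namespace LinearMap

section RCLike

variable {𝕜 E : Type*} [RCLike 𝕜] [NormedAddCommGroup E] [InnerProductSpace 𝕜 E]
  [FiniteDimensional 𝕜 E]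

lemma trace_eq_inner_add_trace_compression (T : E →ₗ[𝕜] E) {x : E} (hx : ‖x‖ = 1) :
    T.trace 𝕜 E = ⟪x, T x⟫_𝕜 + ((𝕜 ∙ x)ᗮ.compression T).trace 𝕜 _ := by
  let c := stdOrthonormalBasis 𝕜 (𝕜 ∙ x)ᗮ
  obtain ⟨b, hb⟩ := OrthonormalBasis.exists_eq_fin_cons hx c
  rw [trace_eq_sum_inner T b, trace_eq_sum_inner _ c, Fin.sum_univ_succ, hb]
  simp only [Fin.cons_zero, Fin.cons_succ, Submodule.inner_compression_apply]

end RCLike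

section Complex

variable {E : Type*} [NormedAddCommGroup E] [InnerProductSpace ℂ E]

def numericalRange (T : E →ₗ[ℂ] E) : Set ℂ := {z | ∃ x, ‖x‖ = 1 ∧ ⟪x, T x⟫_ℂ = z}

lemma inner_smul_map_smul_self (T : E →ₗ[ℂ] E) (a : ℂ) (u : E) :
    ⟪a • u, T (a • u)⟫_ℂ = (Complex.normSq a : ℂ) * ⟪u, T u⟫_ℂ := by
  rw [map_smul, inner_smul_left, inner_smul_right, ← mul_assoc, Complex.normSq_eq_conj_mul_self]

lemma exists_ne_zero_inner_map_self_eq_zero (C : E →ₗ[ℂ] E) {u v : E} {p q : ℝ}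
    (hu : ⟪u, C u⟫_ℂ = p) (hv : ⟪v, C v⟫_ℂ = q) (hp : p < 0) (hq : 0 < q) :
    ∃ y ≠ 0, ⟪y, C y⟫_ℂ = 0 := by
  generalize hc : ⟪u, C v⟫_ℂ = c
  generalize hd : ⟪v, C u⟫_ℂ = d
  -- rotating `v` by a suitable `z` makes the cross term `z * c + conj z * d` real
  obtain ⟨z, hz, hzcd⟩ : ∃ z : ℂ, z ≠ 0 ∧ (z * c + conj z * d).im = 0 := by
    by_cases hw : conj c - d = 0
    · refine ⟨1, one_ne_zero, ?_⟩
      simp [← sub_eq_zero.1 hw]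
    · refine ⟨conj c - d, hw, ?_⟩
      simp [Complex.mul_im]
      ring
  set κ := (z * c + conj z * d).re
  have hκ : z * c + conj z * d = κ := Complex.ext rfl (by simpa using hzcd)
  let y : ℝ → E := fun s => ((1 - s : ℝ) : ℂ) • u + ((s : ℂ) * z) • v
  let f : ℝ → ℝ := fun s => (1 - s) ^ 2 * p + s ^ 2 * (Complex.normSq z * q) + s * (1 - s) * κ
  have hyf : ∀ s, ⟪y s, C (y s)⟫_ℂ = f s := by
    intro s
    simp only [y, f, map_add, map_smul, inner_add_left, inner_add_right, inner_smul_left,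
      inner_smul_right, hu, hv, hc, hd]
    push_cast
    rw [Complex.normSq_eq_conj_mul_self, ← hκ]
    simp only [map_mul, map_sub, map_one, Complex.conj_ofReal]
    ring
  have hz2 : 0 < Complex.normSq z := Complex.normSq_pos.2 hz
  obtain ⟨s, -, hs⟩ : ∃ s ∈ Set.Icc (0 : ℝ) 1, f s = 0 :=
    intermediate_value_Icc zero_le_one (by fun_prop)
      ⟨by simp [f]; linarith, by simp [f]; positivity⟩
  refine ⟨y s, fun hy0 => ?_, by rw [hyf, hs, Complex.ofReal_zero]⟩
  have hquad : (1 - s) * (1 - s) * p = s * s * Complex.normSq z * q := by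
    have h := congrArg (fun w => ⟪w, C w⟫_ℂ) (eq_neg_of_add_eq_zero_left hy0)
    simp only [← neg_smul, inner_smul_map_smul_self, hu, hv] at h
    rw [Complex.normSq_neg, Complex.normSq_mul, Complex.normSq_ofReal,
      Complex.normSq_ofReal] at h
    exact_mod_cast h
  have h0 : (1 - s) * (1 - s) * p = 0 :=
    le_antisymm (mul_nonpos_of_nonneg_of_nonpos (mul_self_nonneg _) hp.le)
      (hquad ▸ mul_nonneg (mul_nonneg (mul_self_nonneg s) hz2.le) hq.le)
  have hs1 : 1 - s = 0 := by simpa [hp.ne] using h0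
  have hs0 : s = 0 := by simpa [hz2.ne', hq.ne'] using hquad.symm.trans h0
  linarith

lemma mem_numericalRange_of_inner_map_self_eq {T : E →ₗ[ℂ] E} {y : E} {γ : ℂ} (hy : y ≠ 0)
    (h : ⟪y, T y⟫_ℂ = γ * ⟪y, y⟫_ℂ) : γ ∈ T.numericalRange := by
  refine ⟨(‖y‖⁻¹ : ℂ) • y, norm_smul_inv_norm hy, ?_⟩
  have hy' : (‖y‖ : ℂ) ≠ 0 := by simpa using hy
  rw [inner_smul_map_smul_self, h, inner_self_eq_norm_sq_to_K, Complex.normSq_eq_conj_mul_self]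
  simp only [map_inv₀, Complex.conj_ofReal, RCLike.ofReal_eq_complex_ofReal]
  field_simp

theorem convex_numericalRange (T : E →ₗ[ℂ] E) : Convex ℝ T.numericalRange := by
  rintro _ ⟨u, hu, rfl⟩ _ ⟨v, hv, rfl⟩ a b ha hb hab
  set z₁ := ⟪u, T u⟫_ℂ
  set z₂ := ⟪v, T v⟫_ℂ
  rcases ha.eq_or_lt with rfl | ha
  · rw [zero_add] at hab
    simpa [hab] using ⟨v, hv, rfl⟩
  rcases hb.eq_or_lt with rfl | hb
  · rw [add_zero] at hab
    simpa [hab] using ⟨u, hu, rfl⟩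
  by_cases hz : z₁ = z₂
  · rw [hz, ← add_smul, hab, one_smul]
    exact ⟨v, hv, rfl⟩
  set γ : ℂ := a • z₁ + b • z₂
  -- after this affine change, `u` and `v` have real values of opposite signs
  let C : E →ₗ[ℂ] E := (z₂ - z₁)⁻¹ • (T - γ • LinearMap.id)
  have hC : ∀ y, ⟪y, C y⟫_ℂ = (z₂ - z₁)⁻¹ * (⟪y, T y⟫_ℂ - γ * ⟪y, y⟫_ℂ) := by
    intro y
    simp [C]
  have hd : z₂ - z₁ ≠ 0 := sub_ne_zero.2 (Ne.symm hz)
  have hb1 : (b : ℂ) = 1 - a := by rw [eq_sub_iff_add_eq, add_comm]; exact_mod_cast hab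
  obtain ⟨y, hy, hyC⟩ := exists_ne_zero_inner_map_self_eq_zero C (p := -b) (q := a)
    (by rw [hC, inner_self_eq_norm_sq_to_K, hu]; field_simp; simp [γ, hb1]; ring)
    (by rw [hC, inner_self_eq_norm_sq_to_K, hv]; field_simp; simp [γ, hb1]; ring)
    (by linarith) ha
  refine mem_numericalRange_of_inner_map_self_eq hy ?_
  rw [hC, mul_eq_zero] at hyC
  exact sub_eq_zero.1 (hyC.resolve_left (inv_ne_zero hd))

theorem zero_mem_numericalRange_of_trace_eq_zero [FiniteDimensional ℂ E] [Nontrivial E]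
    {T : E →ₗ[ℂ] E} (hT : T.trace ℂ E = 0) : 0 ∈ T.numericalRange := by
  let b := stdOrthonormalBasis ℂ E
  have hn : (0 : ℝ) < finrank ℂ E := by exact_mod_cast finrank_pos
  have := (convex_numericalRange T).sum_mem (t := Finset.univ) (w := fun _ => (finrank ℂ E : ℝ)⁻¹)
    (z := fun i => ⟪b i, T (b i)⟫_ℂ) (fun _ _ => by positivity) (by simp [hn.ne'])
    (fun i _ => ⟨b i, b.orthonormal.1 i, rfl⟩)
  rwa [← Finset.smul_sum, ← trace_eq_sum_inner, hT, smul_zero] at this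

theorem exists_orthonormalBasis_inner_map_self_eq_zero [FiniteDimensional ℂ E] {n : ℕ}
    (hn : finrank ℂ E = n) {T : E →ₗ[ℂ] E} (hT : T.trace ℂ E = 0) :
    ∃ b : OrthonormalBasis (Fin n) ℂ E, ∀ i, ⟪b i, T (b i)⟫_ℂ = 0 := by
  induction n generalizing E with
  | zero => exact ⟨(stdOrthonormalBasis ℂ E).reindex (finCongr hn), fun i => i.elim0⟩
  | succ n ih =>
    have : Nontrivial E := Module.nontrivial_of_finrank_eq_succ hn
    have : Fact (finrank ℂ E = n + 1) := ⟨hn⟩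
    obtain ⟨x, hx, hxT⟩ := zero_mem_numericalRange_of_trace_eq_zero hT
    have hx0 : x ≠ 0 := norm_ne_zero_iff.1 (hx ▸ one_ne_zero)
    obtain ⟨c, hc⟩ := ih (Submodule.finrank_orthogonal_span_singleton hx0)
      (T := (ℂ ∙ x)ᗮ.compression T)
      (by rwa [trace_eq_inner_add_trace_compression T hx, hxT, zero_add] at hT)
    obtain ⟨b, hb⟩ := OrthonormalBasis.exists_eq_fin_cons hx c
    refine ⟨b, Fin.cases ?_ fun j => ?_⟩
    · simpa only [hb, Fin.cons_zero] using hxT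
    · simpa only [hb, Fin.cons_succ, Submodule.inner_compression_apply] using hc j

end Complex

end LinearMap

namespace Matrix

variable {𝕜 n : Type*} [RCLike 𝕜] [Fintype n] [DecidableEq n]

lemma trace_toEuclideanLin (A : Matrix n n 𝕜) : (toEuclideanLin A).trace 𝕜 _ = A.trace := by
  rw [toEuclideanLin_eq_toLin_orthonormal, trace_toLin_eq]

lemma star_toMatrix_mul_mul_toMatrix_apply_self (A : Matrix n n 𝕜)
    (b : OrthonormalBasis n 𝕜 (EuclideanSpace 𝕜 n)) (i : n) :
    (star ((EuclideanSpace.basisFun n 𝕜).toBasis.toMatrix b.toBasis) * A *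
      (EuclideanSpace.basisFun n 𝕜).toBasis.toMatrix b.toBasis) i i
      = ⟪b i, toEuclideanLin A (b i)⟫_𝕜 := by
  simp [mul_apply, EuclideanSpace.inner_eq_star_dotProduct, dotProduct, mulVec,
    Finset.sum_mul, Basis.toMatrix_apply]
  rw [Finset.sum_comm]
  exact Finset.sum_congr rfl fun _ _ => Finset.sum_congr rfl fun _ _ => by ring

end Matrix

/-- Every zero-trace complex matrix is unitarily equivalent to a matrix with zero diagonal. -/
theorem stmt2 {m : ℕ} (A : Matrix (Fin m) (Fin m) ℂ) (hA : A.trace = 0) :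
    ∃ U : Matrix.unitaryGroup (Fin m) ℂ,
      ∀ i, ((star U : Matrix (Fin m) (Fin m) ℂ) * A * (U : Matrix (Fin m) (Fin m) ℂ)) i i = 0 := by
  obtain ⟨b, hb⟩ := LinearMap.exists_orthonormalBasis_inner_map_self_eq_zero
    finrank_euclideanSpace_fin (by rwa [Matrix.trace_toEuclideanLin])
  refine ⟨⟨_, (EuclideanSpace.basisFun (Fin m) ℂ).toMatrix_orthonormalBasis_mem_unitary b⟩,
    fun i => ?_⟩
  rw [← hb i, ← Matrix.star_toMatrix_mul_mul_toMatrix_apply_self]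
  rfl
end

section
/- Let G ⊂ ℤ + ℤi be a set of m Gaussian integers with the m smallest absolute values (ties broken arbitrarily). Then every z ∈ G satisfies |z| ≤ 1 + √(m/π). -/
/-!
Every point of the plane lies in the unit square centred at the nearest Gaussian integer, which
is at distance at most `1` from it. If `z ∈ G` and `r = |z| - 1`, every Gaussian integer of
absolute value below `|z| = r + 1` belongs to `G` by minimality, so the `m` unit squares centred
at the points of `G` cover the disc of radius `r`. Comparing areas gives `π r² ≤ m`.
-/

open MeasureTheory Metric Set

/-- A Gaussian integer. -/
def IsGaussianInt (z : ℂ) : Prop := ∃ a b : ℤ, z = (a : ℂ) + (b : ℂ) * Complex.I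

theorem Complex.volume_reProdIm (s t : Set ℝ) : volume (s ×ℂ t) = volume s * volume t := by
  change volume (measurableEquivRealProd ⁻¹' (s ×ˢ t)) = _
  rw [volume_preserving_equiv_real_prod.measure_preimage_equiv, Measure.volume_eq_prod,
    Measure.prod_prod]

def unitSquare (w : ℂ) : Set ℂ := closedBall w.re (1 / 2) ×ℂ closedBall w.im (1 / 2)

theorem volume_unitSquare (w : ℂ) : volume (unitSquare w) = 1 := by
  simp only [unitSquare, Complex.volume_reProdIm, Real.volume_closedBall]
  norm_num

noncomputable def roundGaussian (x : ℂ) : ℂ := (round x.re : ℂ) + (round x.im : ℂ) * Complex.I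

theorem isGaussianInt_roundGaussian (x : ℂ) : IsGaussianInt (roundGaussian x) :=
  ⟨round x.re, round x.im, rfl⟩

theorem mem_unitSquare_roundGaussian (x : ℂ) : x ∈ unitSquare (roundGaussian x) := by
  simp only [unitSquare, Complex.mem_reProdIm, mem_closedBall, Real.dist_eq]
  simpa [roundGaussian] using And.intro (abs_sub_round x.re) (abs_sub_round x.im)

theorem norm_sub_le_one_of_mem_unitSquare {x w : ℂ} (hx : x ∈ unitSquare w) : ‖w - x‖ ≤ 1 := by
  simp only [unitSquare, Complex.mem_reProdIm, mem_closedBall, Real.dist_eq] at hx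
  calc ‖w - x‖ ≤ |(w - x).re| + |(w - x).im| := Complex.norm_le_abs_re_add_abs_im _
    _ ≤ 1 / 2 + 1 / 2 := by
        simp only [Complex.sub_re, Complex.sub_im, abs_sub_comm w.re, abs_sub_comm w.im]
        exact add_le_add hx.1 hx.2
    _ = 1 := by norm_num

theorem norm_roundGaussian_le (x : ℂ) : ‖roundGaussian x‖ ≤ ‖x‖ + 1 :=
  (norm_le_norm_add_norm_sub' _ x).trans <|
    add_le_add_right (norm_sub_le_one_of_mem_unitSquare (mem_unitSquare_roundGaussian x)) _

theorem ball_subset_biUnion_unitSquare {G : Finset ℂ} {r : ℝ}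
    (hG : ∀ w, IsGaussianInt w → ‖w‖ < r + 1 → w ∈ G) :
    ball 0 r ⊆ ⋃ w ∈ G, unitSquare w := by
  intro x hx
  rw [mem_ball_zero_iff] at hx
  refine mem_biUnion (hG _ (isGaussianInt_roundGaussian x) ?_) (mem_unitSquare_roundGaussian x)
  linarith [norm_roundGaussian_le x]

theorem pi_mul_sq_le_card {G : Finset ℂ} {r : ℝ} (hr : 0 ≤ r)
    (hG : ∀ w, IsGaussianInt w → ‖w‖ < r + 1 → w ∈ G) :
    Real.pi * r ^ 2 ≤ G.card := by
  have hvol : ENNReal.ofReal (Real.pi * r ^ 2) = volume (ball (0 : ℂ) r) := by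
    rw [Complex.volume_ball, ENNReal.ofReal_mul Real.pi_pos.le, ENNReal.ofReal_pow hr, mul_comm,
      ← NNReal.coe_real_pi, ENNReal.ofReal_coe_nnreal]
  have hcover : volume (ball (0 : ℂ) r) ≤ G.card :=
    calc volume (ball (0 : ℂ) r) ≤ volume (⋃ w ∈ G, unitSquare w) :=
          measure_mono (ball_subset_biUnion_unitSquare hG)
      _ ≤ ∑ w ∈ G, volume (unitSquare w) := measure_biUnion_finset_le G _
      _ = G.card := by simp [volume_unitSquare]
  rw [← hvol, ← ENNReal.ofReal_natCast] at hcover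
  exact (ENNReal.ofReal_le_ofReal_iff (Nat.cast_nonneg _)).mp hcover

theorem stmt5_general {m : ℕ} (G : Finset ℂ) (hGcard : G.card = m)
    (hmin : ∀ z : ℂ, IsGaussianInt z → z ∉ G → ∀ w ∈ G, ‖w‖ ≤ ‖z‖) :
    ∀ z ∈ G, ‖z‖ ≤ 1 + Real.sqrt (m / Real.pi) := by
  intro z hz
  rcases lt_or_ge ‖z‖ 1 with hz1 | hz1
  · linarith [Real.sqrt_nonneg (m / Real.pi)]
  have hsmall : ∀ w, IsGaussianInt w → ‖w‖ < (‖z‖ - 1) + 1 → w ∈ G := fun w hw hwz => by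
    by_contra hwG
    linarith [hmin w hw hwG z hz]
  have harea := pi_mul_sq_le_card (sub_nonneg.2 hz1) hsmall
  rw [hGcard] at harea
  have hr : ‖z‖ - 1 ≤ Real.sqrt (m / Real.pi) :=
    (Real.le_sqrt (sub_nonneg.2 hz1) (by positivity)).2
      ((le_div_iff₀ Real.pi_pos).2 (by linarith))
  linarith

/-- If `G` consists of `m` Gaussian integers with the `m` smallest absolute values, then
every `z ∈ G` has `|z| ≤ 1 + √(m/π)`. -/
theorem stmt5 {m : ℕ} (G : Finset ℂ) (hGcard : G.card = m)
    (hGauss : ∀ z ∈ G, IsGaussianInt z)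
    (hmin : ∀ z : ℂ, IsGaussianInt z → z ∉ G → ∀ w ∈ G, ‖w‖ ≤ ‖z‖) :
    ∀ z ∈ G, ‖z‖ ≤ 1 + Real.sqrt (m / Real.pi) :=
  stmt5_general G hGcard hmin
end

section
/- There exists an absolute constant a such that for every m ≥ 2, every set G of m distinct Gaussian integers each of absolute value at most 1 + √(m/π), and every b ∈ G: (1/(m-1)) ∑_{w ∈ G, w ≠ b} 1/|b - w|² ≤ (a + π log m)/m. -/
open Real Finset

lemma sum_Icc_neg_self_of_even {g : ℤ → ℝ} (hg : Function.Even g) (P : ℕ) :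
    ∑ q ∈ Icc (-P : ℤ) P, g q = g 0 + 2 * ∑ n ∈ range P, g (n + 1) := by
  induction P with
  | zero => simp
  | succ n ih =>
    have hIcc : Icc (-((n + 1 : ℕ) : ℤ)) ((n + 1 : ℕ) : ℤ) =
        insert (-((n : ℤ) + 1)) (insert ((n : ℤ) + 1) (Icc (-(n : ℤ)) n)) := by
      ext x; simp; omega
    rw [hIcc, sum_insert (by simp; omega), sum_insert (by simp), ih, sum_range_succ, hg]
    ring

lemma sum_range_inv_sq_add_sq_le {c : ℝ} (hc : 0 < c) (P : ℕ) :
    ∑ n ∈ range P, (c ^ 2 + ((n : ℝ) + 1) ^ 2)⁻¹ ≤ π / (2 * c) := by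
  have hanti : AntitoneOn (fun x : ℝ => (c ^ 2 + x ^ 2)⁻¹) (Set.Icc 0 (0 + P)) := by
    intro x hx y _ hxy
    have hx0 : 0 ≤ x := hx.1
    dsimp only
    gcongr
  calc ∑ n ∈ range P, (c ^ 2 + ((n : ℝ) + 1) ^ 2)⁻¹
      ≤ ∫ x in (0 : ℝ)..0 + P, (c ^ 2 + x ^ 2)⁻¹ := by
        simpa using hanti.sum_le_integral
    _ = c⁻¹ * arctan (P / c) := by simp [integral_inv_sq_add_sq hc.ne']
    _ ≤ c⁻¹ * (π / 2) := by gcongr; exact (arctan_lt_pi_div_two _).le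
    _ = π / (2 * c) := by field_simp

lemma sum_range_inv_sq_le_two (P : ℕ) : ∑ n ∈ range P, (((n : ℝ) + 1) ^ 2)⁻¹ ≤ 2 := by
  have hIoo : Ioo 0 (P + 1) = Ico (0 + 1) (P + 1) := by ext; simp; omega
  have := sum_Ioo_inv_sq_le (α := ℝ) 0 (P + 1)
  rw [hIoo, ← sum_Ico_add'] at this
  simpa using this

lemma sum_range_inv_le_one_add_log (P : ℕ) : ∑ n ∈ range P, ((n : ℝ) + 1)⁻¹ ≤ 1 + log P := by
  have := harmonic_le_one_add_log P
  simpa [harmonic] using this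

lemma sum_Icc_prod_Icc_inv_sq_add_sq_le (P : ℕ) :
    ∑ t ∈ Icc (-P : ℤ) P ×ˢ Icc (-P : ℤ) P, ((t.1 : ℝ) ^ 2 + (t.2 : ℝ) ^ 2)⁻¹ ≤
      8 + 2 * π + 2 * π * log P := by
  set row : ℤ → ℝ := fun p => ∑ q ∈ Icc (-P : ℤ) P, ((p : ℝ) ^ 2 + (q : ℝ) ^ 2)⁻¹ with hrow
  have row_eq (p : ℤ) :
      row p = ((p : ℝ) ^ 2)⁻¹ + 2 * ∑ n ∈ range P, ((p : ℝ) ^ 2 + ((n : ℝ) + 1) ^ 2)⁻¹ := by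
    convert sum_Icc_neg_self_of_even
      (g := fun q : ℤ => ((p : ℝ) ^ 2 + (q : ℝ) ^ 2)⁻¹) (fun q => by simp) P using 2 <;> simp
  -- the term at the origin is `(0 + 0)⁻¹ = 0`
  have row_zero : row 0 ≤ 4 := by
    have := sum_range_inv_sq_le_two P
    rw [row_eq]
    simp only [Int.cast_zero, zero_pow two_ne_zero, inv_zero, zero_add]
    linarith
  have row_succ (n : ℕ) : row (n + 1) ≤ (((n : ℝ) + 1) ^ 2)⁻¹ + π * ((n : ℝ) + 1)⁻¹ := by
    have := sum_range_inv_sq_add_sq_le (c := (n : ℝ) + 1) (by positivity) P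
    rw [row_eq]
    push_cast
    have : 2 * (π / (2 * ((n : ℝ) + 1))) = π * ((n : ℝ) + 1)⁻¹ := by field_simp
    linarith
  calc ∑ t ∈ Icc (-P : ℤ) P ×ˢ Icc (-P : ℤ) P, ((t.1 : ℝ) ^ 2 + (t.2 : ℝ) ^ 2)⁻¹
      = ∑ p ∈ Icc (-P : ℤ) P, row p := sum_product ..
    _ = row 0 + 2 * ∑ n ∈ range P, row (n + 1) :=
        sum_Icc_neg_self_of_even (fun p => by simp [hrow]) P
    _ ≤ 4 + 2 * ∑ n ∈ range P, ((((n : ℝ) + 1) ^ 2)⁻¹ + π * ((n : ℝ) + 1)⁻¹) := by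
        gcongr with n
        exact row_succ n
    _ = 4 + 2 * ∑ n ∈ range P, (((n : ℝ) + 1) ^ 2)⁻¹ + 2 * π * ∑ n ∈ range P, ((n : ℝ) + 1)⁻¹ := by
        rw [sum_add_distrib, ← mul_sum]; ring
    _ ≤ 4 + 2 * 2 + 2 * π * (1 + log P) := by
        gcongr
        · exact sum_range_inv_sq_le_two P
        · exact sum_range_inv_le_one_add_log P
    _ = 8 + 2 * π + 2 * π * log P := by ring

lemma IsGaussianInt.sub {z w : ℂ} (hz : IsGaussianInt z) (hw : IsGaussianInt w) :
    IsGaussianInt (z - w) := by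
  obtain ⟨a, b, rfl⟩ := hz
  obtain ⟨c, d, rfl⟩ := hw
  exact ⟨a - c, b - d, by push_cast; ring⟩

lemma IsGaussianInt.mem_image_Icc_prod_Icc {z : ℂ} (hz : IsGaussianInt z) {P : ℕ}
    (hzP : ‖z‖ ≤ P) :
    z ∈ (Icc (-P : ℤ) P ×ˢ Icc (-P : ℤ) P).image fun t => (t.1 : ℂ) + t.2 * Complex.I := by
  obtain ⟨a, b, rfl⟩ := hz
  have ha : |(a : ℝ)| ≤ P := by simpa using (Complex.abs_re_le_norm _).trans hzP
  have hb : |(b : ℝ)| ≤ P := by simpa using (Complex.abs_im_le_norm _).trans hzP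
  rw [abs_le] at ha hb
  refine mem_image.2 ⟨(a, b), ?_, rfl⟩
  simp only [mem_product, mem_Icc]
  exact ⟨⟨by exact_mod_cast ha.1, by exact_mod_cast ha.2⟩,
    ⟨by exact_mod_cast hb.1, by exact_mod_cast hb.2⟩⟩

lemma sum_one_div_sq_norm_le_of_isGaussianInt {S : Finset ℂ} {P : ℕ}
    (hS : ∀ z ∈ S, IsGaussianInt z) (hSP : ∀ z ∈ S, ‖z‖ ≤ P) :
    ∑ z ∈ S, 1 / ‖z‖ ^ 2 ≤ 8 + 2 * π + 2 * π * log P := by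
  set ι : ℤ × ℤ → ℂ := fun t => (t.1 : ℂ) + t.2 * Complex.I
  have hι : Function.Injective ι := fun s t hst => by
    simpa [ι, Complex.ext_iff, Prod.ext_iff] using hst
  calc ∑ z ∈ S, 1 / ‖z‖ ^ 2
      ≤ ∑ z ∈ (Icc (-P : ℤ) P ×ˢ Icc (-P : ℤ) P).image ι, 1 / ‖z‖ ^ 2 :=
        sum_le_sum_of_subset_of_nonneg
          (fun z hz => (hS z hz).mem_image_Icc_prod_Icc (hSP z hz)) (fun _ _ _ => by positivity)
    _ = ∑ t ∈ Icc (-P : ℤ) P ×ˢ Icc (-P : ℤ) P, ((t.1 : ℝ) ^ 2 + (t.2 : ℝ) ^ 2)⁻¹ := by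
        rw [sum_image hι.injOn]
        refine sum_congr rfl fun t _ => ?_
        rw [one_div, Complex.sq_norm]
        simpa [ι] using Complex.normSq_add_mul_I (t.1 : ℝ) t.2
    _ ≤ 8 + 2 * π + 2 * π * log P := sum_Icc_prod_Icc_inv_sq_add_sq_le P

lemma sum_one_div_sq_norm_sub_le {G : Finset ℂ} {b : ℂ} {r : ℝ}
    (hG : ∀ z ∈ G, IsGaussianInt z) (hGr : ∀ z ∈ G, ‖z‖ ≤ r)
    (hb : IsGaussianInt b) (hbr : ‖b‖ ≤ r) :
    ∑ w ∈ G, 1 / ‖b - w‖ ^ 2 ≤ 8 + 2 * π + 2 * π * log ⌈2 * r⌉₊ := by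
  rw [← sum_image (f := fun z => 1 / ‖z‖ ^ 2) sub_right_injective.injOn]
  refine sum_one_div_sq_norm_le_of_isGaussianInt ?_ ?_ <;>
    simp only [mem_image, forall_exists_index, and_imp, forall_apply_eq_imp_iff₂]
  · exact fun w hw => hb.sub (hG w hw)
  · intro w hw
    calc ‖b - w‖ ≤ ‖b‖ + ‖w‖ := norm_sub_le b w
      _ ≤ 2 * r := by linarith [hGr w hw]
      _ ≤ ⌈2 * r⌉₊ := Nat.le_ceil _

lemma log_ceil_two_mul_one_add_sqrt_div_pi_le {m : ℝ} (hm : 1 ≤ m) :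
    log ⌈2 * (1 + √(m / π))⌉₊ ≤ log 5 + log m / 2 := by
  have hsqrt : √(m / π) ≤ √m :=
    Real.sqrt_le_sqrt (div_le_self (by linarith) (by linarith [pi_gt_three]))
  have hone : 1 ≤ √m := Real.one_le_sqrt.2 hm
  have hpos : (0 : ℝ) < ⌈2 * (1 + √(m / π))⌉₊ := by
    have := Real.sqrt_nonneg (m / π)
    exact_mod_cast Nat.ceil_pos.2 (by positivity)
  calc log ⌈2 * (1 + √(m / π))⌉₊
      ≤ log (5 * √m) := by
        refine log_le_log hpos ?_
        have := Nat.ceil_lt_add_one (show 0 ≤ 2 * (1 + √(m / π)) by positivity)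
        linarith
    _ = log 5 + log m / 2 := by
        rw [log_mul (by norm_num) (by positivity), log_sqrt (by linarith)]

lemma one_div_sub_one_mul_le {m S : ℝ} (hm : 2 ≤ m) (hS : S ≤ 48 + π * log m) :
    1 / (m - 1) * S ≤ (100 + π * log m) / m := by
  have hlog : π * log m ≤ 4 * (m - 1) :=
    mul_le_mul pi_le_four (log_le_sub_one_of_pos (by linarith))
      (log_nonneg (by linarith)) (by norm_num)
  rw [one_div_mul_eq_div, div_le_div_iff₀ (by linarith) (by linarith)]
  nlinarith

/-- There is an absolute constant `a` such that for every set `G` of `m ≥ 2` distinct Gaussian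
integers of absolute value at most `1 + √(m/π)` and every `b ∈ G`,
`(1/(m-1)) ∑_{w ∈ G, w ≠ b} 1/|b-w|² ≤ (a + π log m)/m`. -/
theorem stmt6 :
    ∃ a : ℝ, ∀ (m : ℕ), 2 ≤ m → ∀ G : Finset ℂ, G.card = m →
      (∀ z ∈ G, IsGaussianInt z) →
      (∀ z ∈ G, ‖z‖ ≤ 1 + Real.sqrt (m / Real.pi)) →
      ∀ b ∈ G,
        (1 / (m - 1 : ℝ)) * ∑ w ∈ G.erase b, 1 / ‖b - w‖ ^ 2 ≤
          (a + Real.pi * Real.log m) / m := by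
  refine ⟨100, fun m hm G _ hG hGr b hb => one_div_sub_one_mul_le (by exact_mod_cast hm) ?_⟩
  have hsum := sum_one_div_sq_norm_sub_le (G := G.erase b)
    (fun z hz => hG z (mem_of_mem_erase hz)) (fun z hz => hGr z (mem_of_mem_erase hz))
    (hG b hb) (hGr b hb)
  have hlog := log_ceil_two_mul_one_add_sqrt_div_pi_le (m := m) (by norm_cast; omega)
  have hlog5 : log 5 ≤ 4 := by linarith [log_le_sub_one_of_pos (show (0 : ℝ) < 5 by norm_num)]
  calc ∑ w ∈ G.erase b, 1 / ‖b - w‖ ^ 2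
      ≤ 8 + 2 * π + 2 * π * log ⌈2 * (1 + √(m / π))⌉₊ := hsum
    _ ≤ 8 + 2 * π + 2 * π * (log 5 + log m / 2) := by gcongr
    _ ≤ 48 + π * log m := by nlinarith [pi_le_four, pi_pos]
end

section
/- (Variation on Brown's lemma) Let S, T be bounded operators on ℓ₂^m (m ≤ ∞), λ ∈ ℂ, and M a finite-dimensional subspace such that the range of [S,T] + λI is contained in M. Then there exist mutually orthogonal subspaces H₀, H₁, H₂, … with H₀ = M, dim Hₙ ≤ (n+1)·dim M for n ≥ 1, such that PᵢSPⱼ = PᵢTPⱼ = 0 whenever i > j+1 (Pₗ the orthogonal projection onto Hₗ), and the closed span of ⋃ₙ Hₙ is invariant under both S and T. -/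
/-!
Let `Eₙ` be the span of the subspaces `Tᵃ Sᵇ M` with `a + b ≤ n`. Clearly `T Eₙ ⊆ Eₙ₊₁`, and also
`S Eₙ ⊆ Eₙ₊₁`, because the commutator condition lets `S` be moved past `T` at the cost of a term
in `M ⊆ Eₙ₊₁`. Since `Eₙ₊₁ = T Eₙ + (M + S M + ⋯ + Sⁿ⁺¹ M)`, the orthogonal complement `Hₙ₊₁` of
`Eₙ` in `Eₙ₊₁` has dimension at most `(n + 2) dim M`. For `x ∈ Hⱼ` the vectors `S x`, `T x` lie in
`Eⱼ₊₁`, which is orthogonal to every `Hᵢ` with `i > j + 1`; and `⋃ Eₙ = ⋃ Hₙ` is invariant under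
`S` and `T`, hence so is its closure.
-/

open Module

section Krylov

variable {K V : Type*} [DivisionRing K] [AddCommGroup V] [Module K V]

def krylovSpace (S : Module.End K V) (M : Submodule K V) : ℕ → Submodule K V
  | 0 => M
  | n + 1 => M ⊔ (krylovSpace S M n).map S

variable (S : Module.End K V) (M : Submodule K V)

lemma le_krylovSpace : ∀ n, M ≤ krylovSpace S M n
  | 0 => le_rfl
  | _ + 1 => le_sup_left

lemma map_krylovSpace_le (n : ℕ) : (krylovSpace S M n).map S ≤ krylovSpace S M (n + 1) :=
  le_sup_right

lemma krylovSpace_mono : Monotone (krylovSpace S M) := by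
  refine monotone_nat_of_le_succ fun n => ?_
  induction n with
  | zero => exact le_sup_left
  | succ n ih => exact sup_le_sup_left (Submodule.map_mono ih) M

variable [FiniteDimensional K M]

instance finiteDimensional_krylovSpace : ∀ n, FiniteDimensional K (krylovSpace S M n)
  | 0 => inferInstanceAs (FiniteDimensional K M)
  | n + 1 =>
    have := finiteDimensional_krylovSpace n
    Submodule.finiteDimensional_sup _ _

lemma finrank_krylovSpace_le (n : ℕ) :
    finrank K (krylovSpace S M n) ≤ (n + 1) * finrank K M := by
  induction n with
  | zero => rw [zero_add, one_mul]; rfl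
  | succ n ih =>
    calc finrank K (krylovSpace S M (n + 1))
        ≤ finrank K M + finrank K ((krylovSpace S M n).map S) :=
          Submodule.finrank_add_le_finrank_add_finrank _ _
      _ ≤ finrank K M + finrank K (krylovSpace S M n) := by
          gcongr; exact Submodule.finrank_map_le _ _
      _ ≤ (n + 1 + 1) * finrank K M := by linarith

end Krylov

section Brown

variable {K V : Type*} [DivisionRing K] [AddCommGroup V] [Module K V]

/-- `brownSpace S T M n` is the span of the `Tᵃ Sᵇ M` with `a + b ≤ n`. -/
def brownSpace (S T : Module.End K V) (M : Submodule K V) : ℕ → Submodule K V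
  | 0 => M
  | n + 1 => (brownSpace S T M n).map T ⊔ krylovSpace S M (n + 1)

variable (S T : Module.End K V) (M : Submodule K V)

lemma krylovSpace_le_brownSpace : ∀ n, krylovSpace S M n ≤ brownSpace S T M n
  | 0 => le_rfl
  | _ + 1 => le_sup_right

lemma le_brownSpace (n : ℕ) : M ≤ brownSpace S T M n :=
  (le_krylovSpace S M n).trans (krylovSpace_le_brownSpace S T M n)

lemma map_T_brownSpace_le (n : ℕ) :
    (brownSpace S T M n).map T ≤ brownSpace S T M (n + 1) :=
  le_sup_left

lemma brownSpace_mono : Monotone (brownSpace S T M) := by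
  refine monotone_nat_of_le_succ fun n => ?_
  induction n with
  | zero => exact le_brownSpace S T M 1
  | succ n ih =>
    exact sup_le_sup (Submodule.map_mono ih) (krylovSpace_mono S M (Nat.le_succ _))

/-- `S T x = T S x - λ x + ([S, T] + λ) x`, and the last term lies in `M`. -/
lemma map_S_brownSpace_le {lam : K} (hST : ∀ x, S (T x) - T (S x) + lam • x ∈ M) (n : ℕ) :
    (brownSpace S T M n).map S ≤ brownSpace S T M (n + 1) := by
  induction n with
  | zero =>
    exact (map_krylovSpace_le S M 0).trans (krylovSpace_le_brownSpace S T M 1)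
  | succ n ih =>
    rw [brownSpace, Submodule.map_sup, sup_le_iff]
    constructor
    · rintro _ ⟨_, ⟨x, hx, rfl⟩, rfl⟩
      have hTS : T (S x) ∈ brownSpace S T M (n + 2) :=
        map_T_brownSpace_le S T M (n + 1) ⟨S x, ih ⟨x, hx, rfl⟩, rfl⟩
      have hxE : x ∈ brownSpace S T M (n + 2) := brownSpace_mono S T M (by omega) hx
      have hM : S (T x) - T (S x) + lam • x ∈ brownSpace S T M (n + 2) :=
        le_brownSpace S T M _ (hST x)
      have : S (T x) = T (S x) - lam • x + (S (T x) - T (S x) + lam • x) := by abel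
      rw [this]
      exact add_mem (sub_mem hTS (Submodule.smul_mem _ _ hxE)) hM
    · exact (map_krylovSpace_le S M (n + 1)).trans (krylovSpace_le_brownSpace S T M (n + 2))

variable [FiniteDimensional K M]

instance finiteDimensional_brownSpace : ∀ n, FiniteDimensional K (brownSpace S T M n)
  | 0 => inferInstanceAs (FiniteDimensional K M)
  | n + 1 =>
    have := finiteDimensional_brownSpace n
    Submodule.finiteDimensional_sup _ _

lemma finrank_brownSpace_succ_le (n : ℕ) :
    finrank K (brownSpace S T M (n + 1)) ≤
      finrank K (brownSpace S T M n) + (n + 2) * finrank K M :=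
  calc finrank K (brownSpace S T M (n + 1))
      ≤ finrank K ((brownSpace S T M n).map T) + finrank K (krylovSpace S M (n + 1)) :=
        Submodule.finrank_add_le_finrank_add_finrank _ _
    _ ≤ finrank K (brownSpace S T M n) + (n + 2) * finrank K M :=
        add_le_add (Submodule.finrank_map_le _ _) (finrank_krylovSpace_le S M (n + 1))

end Brown

section OrthogonalIncrement

variable {𝕜 V : Type*} [RCLike 𝕜] [NormedAddCommGroup V] [InnerProductSpace 𝕜 V]

def orthogonalIncrement (E : ℕ → Submodule 𝕜 V) : ℕ → Submodule 𝕜 V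
  | 0 => E 0
  | n + 1 => E (n + 1) ⊓ (E n)ᗮ

variable {E : ℕ → Submodule 𝕜 V}

lemma orthogonalIncrement_le : ∀ n, orthogonalIncrement E n ≤ E n
  | 0 => le_rfl
  | _ + 1 => inf_le_left

lemma inner_eq_zero_of_mem_orthogonalIncrement (hE : Monotone E) {m i : ℕ} (hmi : m < i)
    {x y : V} (hx : x ∈ E m) (hy : y ∈ orthogonalIncrement E i) : inner 𝕜 x y = 0 := by
  obtain ⟨k, rfl⟩ : ∃ k, i = k + 1 := ⟨i - 1, by omega⟩
  exact (Submodule.mem_orthogonal _ y).1 hy.2 x (hE (Nat.le_of_lt_succ hmi) hx)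

lemma orthogonalIncrement_isOrtho (hE : Monotone E) {i j : ℕ} (hij : i ≠ j) :
    orthogonalIncrement E i ⟂ orthogonalIncrement E j := by
  rcases hij.lt_or_gt with h | h
  · exact Submodule.isOrtho_iff_inner_eq.2 fun x hx y hy =>
      inner_eq_zero_of_mem_orthogonalIncrement hE h (orthogonalIncrement_le i hx) hy
  · exact (Submodule.isOrtho_iff_inner_eq.2 fun x hx y hy =>
      inner_eq_zero_of_mem_orthogonalIncrement hE h (orthogonalIncrement_le j hx) hy).symm

lemma sup_orthogonalIncrement_succ (hE : Monotone E) (n : ℕ) [(E n).HasOrthogonalProjection] :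
    E n ⊔ orthogonalIncrement E (n + 1) = E (n + 1) := by
  rw [orthogonalIncrement, inf_comm]
  exact Submodule.sup_orthogonal_inf_of_hasOrthogonalProjection (hE n.le_succ)

lemma iSup_orthogonalIncrement (hE : Monotone E) [∀ n, (E n).HasOrthogonalProjection] :
    ⨆ n, orthogonalIncrement E n = ⨆ n, E n := by
  refine le_antisymm (iSup_mono orthogonalIncrement_le) (iSup_le fun n => ?_)
  induction n with
  | zero => exact le_iSup (orthogonalIncrement E) 0
  | succ n ih =>
    rw [← sup_orthogonalIncrement_succ hE n]
    exact sup_le ih (le_iSup _ _)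

lemma finrank_add_finrank_orthogonalIncrement (hE : Monotone E) (n : ℕ)
    [FiniteDimensional 𝕜 (E (n + 1))] :
    finrank 𝕜 (E n) + finrank 𝕜 (orthogonalIncrement E (n + 1)) = finrank 𝕜 (E (n + 1)) := by
  rw [orthogonalIncrement, inf_comm]
  exact Submodule.finrank_add_inf_finrank_orthogonal (hE n.le_succ)

end OrthogonalIncrement

lemma Submodule.mapsTo_topologicalClosure {R M : Type*} [Semiring R] [AddCommMonoid M]
    [Module R M] [TopologicalSpace M] [ContinuousAdd M] [ContinuousConstSMul R M]
    (f : M →L[R] M) {p : Submodule R M} (hp : ∀ x ∈ p, f x ∈ p) :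
    ∀ x ∈ p.topologicalClosure, f x ∈ p.topologicalClosure := by
  simpa only [← SetLike.mem_coe, Submodule.topologicalClosure_coe] using
    fun x hx => Set.MapsTo.closure hp f.continuous hx

lemma Submodule.map_mem_iSup_of_map_le_succ {R M : Type*} [Semiring R] [AddCommMonoid M]
    [Module R M] (f : M →ₗ[R] M) {E : ℕ → Submodule R M} (hE : ∀ n, (E n).map f ≤ E (n + 1)) :
    ∀ x ∈ ⨆ n, E n, f x ∈ ⨆ n, E n := by
  have : (⨆ n, E n).map f ≤ ⨆ n, E n := by
    rw [Submodule.map_iSup]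
    exact iSup_le fun n => (hE n).trans (le_iSup E (n + 1))
  exact fun x hx => this ⟨x, hx, rfl⟩

theorem stmt9_general {H : Type*} [NormedAddCommGroup H] [InnerProductSpace ℂ H]
    (S T : H →L[ℂ] H) (lam : ℂ) (M : Submodule ℂ H) (hM : FiniteDimensional ℂ M)
    (hrange : LinearMap.range ((S * T - T * S : H →L[ℂ] H) + lam • 1).toLinearMap ≤ M) :
    ∃ Hn : ℕ → Submodule ℂ H,
      Hn 0 = M ∧
      (∀ n, FiniteDimensional ℂ (Hn n)) ∧
      (∀ n, 1 ≤ n → Module.finrank ℂ (Hn n) ≤ (n + 1) * Module.finrank ℂ M) ∧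
      (∀ i j, i ≠ j → ∀ x ∈ Hn i, ∀ y ∈ Hn j, inner (𝕜 := ℂ) x y = 0) ∧
      (∀ i j, j + 1 < i → ∀ x ∈ Hn j, ∀ y ∈ Hn i,
          inner (𝕜 := ℂ) (S x) y = 0 ∧ inner (𝕜 := ℂ) (T x) y = 0) ∧
      (∀ x ∈ (⨆ n, Hn n).topologicalClosure, S x ∈ (⨆ n, Hn n).topologicalClosure) ∧
      (∀ x ∈ (⨆ n, Hn n).topologicalClosure, T x ∈ (⨆ n, Hn n).topologicalClosure) := by
  have hST (x : H) : S (T x) - T (S x) + lam • x ∈ M := by simpa using hrange ⟨x, rfl⟩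
  set E := brownSpace (S : H →ₗ[ℂ] H) T M
  have hE : Monotone E := brownSpace_mono _ _ M
  have hS : ∀ n, (E n).map (S : H →ₗ[ℂ] H) ≤ E (n + 1) := map_S_brownSpace_le _ _ M hST
  have hT : ∀ n, (E n).map (T : H →ₗ[ℂ] H) ≤ E (n + 1) := map_T_brownSpace_le _ _ M
  refine ⟨orthogonalIncrement E, rfl, fun n => ?_, fun n hn => ?_,
    fun i j hij => Submodule.isOrtho_iff_inner_eq.1 (orthogonalIncrement_isOrtho hE hij),
    fun i j hji x hx y hy => ?_, ?_, ?_⟩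
  · exact Submodule.finiteDimensional_of_le (orthogonalIncrement_le n)
  · obtain ⟨n, rfl⟩ := Nat.exists_eq_add_of_le' hn
    have := finrank_add_finrank_orthogonalIncrement hE n
    have := finrank_brownSpace_succ_le (S : H →ₗ[ℂ] H) T M n
    linarith
  · replace hx := orthogonalIncrement_le j hx
    exact ⟨inner_eq_zero_of_mem_orthogonalIncrement hE hji (hS j ⟨x, hx, rfl⟩) hy,
      inner_eq_zero_of_mem_orthogonalIncrement hE hji (hT j ⟨x, hx, rfl⟩) hy⟩
  all_goals rw [iSup_orthogonalIncrement hE]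
  · exact Submodule.mapsTo_topologicalClosure S (Submodule.map_mem_iSup_of_map_le_succ _ hS)
  · exact Submodule.mapsTo_topologicalClosure T (Submodule.map_mem_iSup_of_map_le_succ _ hT)

/-- Variation on Brown's lemma: if `S, T` are bounded operators on a complex Hilbert space
(e.g. `ℓ₂^m`, `m ≤ ∞`), `M` is a finite-dimensional subspace and the range of `[S,T] + λI`
is contained in `M`, then there are mutually orthogonal subspaces `H₀ = M, H₁, H₂, …` with
`dim Hₙ ≤ (n+1) dim M`, such that `Pᵢ S Pⱼ = Pᵢ T Pⱼ = 0` for `i > j + 1` (expressed as: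
vectors of `S x`, `T x` for `x ∈ Hⱼ` are orthogonal to `Hᵢ`), and the closed span of the
`Hₙ` is invariant under `S` and `T`. -/
theorem stmt9 {H : Type*} [NormedAddCommGroup H] [InnerProductSpace ℂ H] [CompleteSpace H]
    (S T : H →L[ℂ] H) (lam : ℂ) (M : Submodule ℂ H) (hM : FiniteDimensional ℂ M)
    (hrange : LinearMap.range ((S * T - T * S : H →L[ℂ] H) + lam • 1).toLinearMap ≤ M) :
    ∃ Hn : ℕ → Submodule ℂ H,
      Hn 0 = M ∧
      (∀ n, FiniteDimensional ℂ (Hn n)) ∧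
      (∀ n, 1 ≤ n → Module.finrank ℂ (Hn n) ≤ (n + 1) * Module.finrank ℂ M) ∧
      (∀ i j, i ≠ j → ∀ x ∈ Hn i, ∀ y ∈ Hn j, inner (𝕜 := ℂ) x y = 0) ∧
      (∀ i j, j + 1 < i → ∀ x ∈ Hn j, ∀ y ∈ Hn i,
          inner (𝕜 := ℂ) (S x) y = 0 ∧ inner (𝕜 := ℂ) (T x) y = 0) ∧
      (∀ x ∈ (⨆ n, Hn n).topologicalClosure, S x ∈ (⨆ n, Hn n).topologicalClosure) ∧
      (∀ x ∈ (⨆ n, Hn n).topologicalClosure, T x ∈ (⨆ n, Hn n).topologicalClosure) :=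
  stmt9_general S T lam M hM hrange
end

section
/- Let M be the span of the first basis vector in ℓ₂^m, S, T matrices with range([S,T] + (1/m)I) ⊆ M, and define V₀ = M, Vₙ = span{S^k T^l M : k + l ≤ n}. Then T Vₙ ⊆ V_{n+1} and S Vₙ ⊆ V_{n+1} for all n ≥ 0. -/
/-! Writing `[S, T] = A - c` with `range A ≤ M`, the relation `T S = S T - A + c` moves each `T`
past the `S`'s of a word `S^k T^l` at the cost of a term in `M` and a scalar multiple of a shorter
word. By induction on `k`, `T S^k T^l M ⊆ V_{k+l+1}`, while `S S^k T^l M = S^(k+1) T^l M`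
trivially. -/

open Submodule

variable {R E : Type*} [CommRing R] [AddCommGroup E] [Module R E]

def wordSpan (S T : Module.End R E) (M : Submodule R E) (n : ℕ) : Submodule R E :=
  span R (⋃ (k : ℕ) (l : ℕ) (_ : k + l ≤ n), (S ^ k * T ^ l) '' (M : Set E))

section wordSpan

variable {S T : Module.End R E} {M : Submodule R E}

theorem apply_mem_wordSpan {k l n : ℕ} (hkl : k + l ≤ n) {x : E} (hx : x ∈ M) :
    (S ^ k * T ^ l) x ∈ wordSpan S T M n :=
  subset_span <|
    Set.mem_iUnion.2 ⟨k, Set.mem_iUnion.2 ⟨l, Set.mem_iUnion.2 ⟨hkl, x, hx, rfl⟩⟩⟩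

theorem wordSpan_le_iff {n : ℕ} {N : Submodule R E} :
    wordSpan S T M n ≤ N ↔ ∀ k l, k + l ≤ n → ∀ x ∈ M, (S ^ k * T ^ l) x ∈ N := by
  simp only [wordSpan, span_le, Set.iUnion_subset_iff, Set.image_subset_iff]
  rfl

theorem map_wordSpan_le_iff {n : ℕ} {f : Module.End R E} {N : Submodule R E} :
    (wordSpan S T M n).map f ≤ N ↔
      ∀ k l, k + l ≤ n → ∀ x ∈ M, f ((S ^ k * T ^ l) x) ∈ N := by
  rw [map_le_iff_le_comap, wordSpan_le_iff]
  rfl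

theorem wordSpan_mono : Monotone (wordSpan S T M) := fun _ _ hnn' =>
  wordSpan_le_iff.2 fun _ _ hkl _ hx => apply_mem_wordSpan (hkl.trans hnn') hx

theorem le_wordSpan (n : ℕ) : M ≤ wordSpan S T M n := fun x hx => by
  simpa using apply_mem_wordSpan (S := S) (T := T) (k := 0) (l := 0) (Nat.zero_le n) hx

theorem map_left_wordSpan_le (n : ℕ) : (wordSpan S T M n).map S ≤ wordSpan S T M (n + 1) :=
  map_wordSpan_le_iff.2 fun k l hkl x hx => by
    simpa [pow_succ', mul_assoc] using apply_mem_wordSpan (k := k + 1) (l := l) (by omega) hx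

theorem right_apply_mem_wordSpan {c : R} (hrange : LinearMap.range (S * T - T * S + c • 1) ≤ M)
    (k l : ℕ) {x : E} (hx : x ∈ M) : T ((S ^ k * T ^ l) x) ∈ wordSpan S T M (k + l + 1) := by
  induction k with
  | zero => simpa [pow_succ'] using apply_mem_wordSpan (S := S) (k := 0) (l := l + 1) (by omega) hx
  | succ k ih =>
    set y := (S ^ k * T ^ l) x
    have hcomm : T (S y) = S (T y) - (S * T - T * S + c • 1) y + c • y := by
      simp only [LinearMap.add_apply, LinearMap.sub_apply, Module.End.mul_apply,
        LinearMap.smul_apply, Module.End.one_apply]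
      abel
    have hST : S (T y) ∈ wordSpan S T M (k + 1 + l + 1) :=
      wordSpan_mono (by omega) (map_left_wordSpan_le _ (mem_map_of_mem ih))
    have hA : (S * T - T * S + c • 1) y ∈ wordSpan S T M (k + 1 + l + 1) :=
      le_wordSpan _ (hrange ⟨y, rfl⟩)
    have hy : y ∈ wordSpan S T M (k + 1 + l + 1) := apply_mem_wordSpan (by omega) hx
    rw [pow_succ', mul_assoc, Module.End.mul_apply, hcomm]
    exact add_mem (sub_mem hST hA) (smul_mem _ c hy)

theorem map_right_wordSpan_le {c : R} (hrange : LinearMap.range (S * T - T * S + c • 1) ≤ M)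
    (n : ℕ) :
    (wordSpan S T M n).map T ≤ wordSpan S T M (n + 1) :=
  map_wordSpan_le_iff.2 fun k l hkl _ hx =>
    wordSpan_mono (by omega) (right_apply_mem_wordSpan hrange k l hx)

end wordSpan

/-- Let `M` be the span of the first basis vector in `ℓ₂^m`, `S, T` operators with
`range([S,T] + (1/m) I) ⊆ M`, and `Vₙ = span { S^k T^l M : k + l ≤ n }`. Then
`T Vₙ ⊆ V_{n+1}` and `S Vₙ ⊆ V_{n+1}` for all `n`. -/
theorem stmt11 {m : ℕ}
    (S T : EuclideanSpace ℂ (Fin m) →ₗ[ℂ] EuclideanSpace ℂ (Fin m))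
    (M : Submodule ℂ (EuclideanSpace ℂ (Fin m)))
    (hrange : LinearMap.range ((S * T - T * S) + ((1 : ℂ) / m) • (1 : _)) ≤ M)
    (V : ℕ → Submodule ℂ (EuclideanSpace ℂ (Fin m)))
    (hV : ∀ n, V n = Submodule.span ℂ
        (⋃ (k : ℕ) (l : ℕ) (_ : k + l ≤ n), (S ^ k * T ^ l) '' (M : Set _))) :
    ∀ n, (V n).map T ≤ V (n + 1) ∧ (V n).map S ≤ V (n + 1) := by
  obtain rfl : V = wordSpan S T M := funext hV
  exact fun n => ⟨map_right_wordSpan_le hrange n, map_left_wordSpan_le n⟩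
end

section
/- Let A = P − (1/m)I where P is the rank-one projection onto the first coordinate of ℂ^m. Suppose A = BC − CB with ‖B‖ = 1, and let H₀, H₁, … be orthogonal subspaces spanning ℂ^m with H₀ = range(P), with orthogonal projections Pₗ onto Hₗ satisfying PᵢBPⱼ = PᵢCPⱼ = 0 for i > j+1. Then for every n ≥ 0: 1 − (1/m)∑_{k=0}^n rank(Pₖ) ≤ ‖P_{n+1}CPₙ‖₁ + ‖PₙCP_{n+1}‖₁. -/
/-!
Compress the commutator identity by `Q = P₀ + ⋯ + Pₙ`. On one side, `tr (Q A Q) = tr P₀ - tr Q / m`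
and `tr Q = ∑ₖ rank Pₖ`. On the other, `tr (Q B Q C Q) = tr (Q C Q B Q)`, so `tr (Q [B, C] Q)` only
sees the parts `(1 - Q) B Q` and `(1 - Q) C Q` that leave `range Q`; by the block Hessenberg shape
these are `P_{n+1} B Pₙ` and `P_{n+1} C Pₙ`. Hence
`tr (Q A Q) = tr (Q B · P_{n+1} C Pₙ) - tr (B · Pₙ C P_{n+1})`, and `|tr (X Y)| ≤ ‖X‖ ‖Y‖₁` with
`‖Q B‖, ‖B‖ ≤ 1` bounds both terms.
-/

open scoped ComplexOrder

noncomputable def opNorm {m : ℕ} (A : Matrix (Fin m) (Fin m) ℂ) : ℝ :=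
  ‖Matrix.toEuclideanCLM (𝕜 := ℂ) (n := Fin m) A‖

noncomputable def singVal {m : ℕ} (M : Matrix (Fin m) (Fin m) ℂ) (i : Fin m) : ℝ :=
  Real.sqrt ((Matrix.posSemidef_conjTranspose_mul_self M).1.eigenvalues i)

/-- The trace norm: the sum of the singular values. -/
noncomputable def traceNorm {m : ℕ} (M : Matrix (Fin m) (Fin m) ℂ) : ℝ :=
  ∑ i, singVal M i

open Matrix Finset
open scoped Matrix.Norms.L2Operator

theorem Matrix.trace_eq_rank_of_isIdempotentElem {K n : Type*} [Field K] [Fintype n]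
    [DecidableEq n] {A : Matrix n n K} (hA : IsIdempotentElem A) : A.trace = A.rank := by
  have h : IsIdempotentElem (toLin' A) := hA.map (toLinAlgEquiv' (R := K) (n := n))
  rw [← trace_toLin'_eq, (LinearMap.IsIdempotentElem.isProj_range _ h).trace, rank, toLin'_apply']

theorem Matrix.trace_toEuclideanCLM {𝕜 n : Type*} [RCLike 𝕜] [Fintype n] [DecidableEq n]
    (A : Matrix n n 𝕜) :
    LinearMap.trace 𝕜 _ (toEuclideanCLM (𝕜 := 𝕜) (n := n) A : EuclideanSpace 𝕜 n →ₗ[𝕜] _) =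
      A.trace := by
  rw [coe_toEuclideanCLM_eq_toEuclideanLin, toEuclideanLin_eq_toLin_orthonormal,
    LinearMap.trace_eq_matrix_trace _ (EuclideanSpace.basisFun n 𝕜).toBasis,
    LinearMap.toMatrix_toLin]

section TraceNorm

variable {m : ℕ}

lemma opNorm_eq_norm (A : Matrix (Fin m) (Fin m) ℂ) : opNorm A = ‖A‖ := rfl

lemma norm_toEuclideanCLM_eigenvectorBasis (Y : Matrix (Fin m) (Fin m) ℂ) (i : Fin m) :
    ‖toEuclideanCLM (𝕜 := ℂ) Y
        ((posSemidef_conjTranspose_mul_self Y).1.eigenvectorBasis i)‖ = singVal Y i := by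
  set hH := (posSemidef_conjTranspose_mul_self Y).1
  set v := hH.eigenvectorBasis i
  have hev : toEuclideanCLM (𝕜 := ℂ) (Yᴴ * Y) v = (hH.eigenvalues i : ℂ) • v := by
    refine WithLp.ofLp_injective 2 ?_
    rw [ofLp_toEuclideanCLM, hH.mulVec_eigenvectorBasis, WithLp.ofLp_smul,
      RCLike.real_smul_eq_coe_smul (K := ℂ)]
    rfl
  have hsq : ‖toEuclideanCLM (𝕜 := ℂ) Y v‖ ^ 2 = hH.eigenvalues i := by
    rw [← inner_self_eq_norm_sq (𝕜 := ℂ), ← ContinuousLinearMap.adjoint_inner_right,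
      ← mul_apply_eq_comp, ← ContinuousLinearMap.star_eq_adjoint, ← map_star, ← map_mul,
      star_eq_conjTranspose, hev, inner_smul_right, inner_self_eq_norm_sq_to_K,
      hH.eigenvectorBasis.orthonormal.1 i]
    simp
  rw [singVal, ← hsq, Real.sqrt_sq (norm_nonneg _)]

lemma norm_trace_mul_le (X Y : Matrix (Fin m) (Fin m) ℂ) :
    ‖(X * Y).trace‖ ≤ opNorm X * traceNorm Y := by
  set b := (posSemidef_conjTranspose_mul_self Y).1.eigenvectorBasis
  rw [← trace_toEuclideanCLM, LinearMap.trace_eq_sum_inner _ b, traceNorm, mul_sum]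
  refine (norm_sum_le _ _).trans (sum_le_sum fun i _ => ?_)
  rw [map_mul, ContinuousLinearMap.coe_coe, mul_apply_eq_comp]
  calc _ ≤ ‖b i‖ * ‖toEuclideanCLM (𝕜 := ℂ) X (toEuclideanCLM (𝕜 := ℂ) Y (b i))‖ :=
        norm_inner_le_norm _ _
    _ ≤ opNorm X * singVal Y i := by
      rw [b.orthonormal.1 i, one_mul, ← norm_toEuclideanCLM_eigenvectorBasis]
      exact ContinuousLinearMap.le_opNorm _ _

lemma norm_trace_mul_le_traceNorm {X : Matrix (Fin m) (Fin m) ℂ} (hX : opNorm X ≤ 1)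
    (Y : Matrix (Fin m) (Fin m) ℂ) : ‖(X * Y).trace‖ ≤ traceNorm Y :=
  (norm_trace_mul_le X Y).trans <|
    mul_le_of_le_one_left (sum_nonneg fun _ _ => Real.sqrt_nonneg _) hX

end TraceNorm

lemma OrthogonalIdempotents.sum_mul_of_mem {R I : Type*} [Semiring R] {e : I → R}
    (he : OrthogonalIdempotents e) {i : I} {s : Finset I} (h : i ∈ s) :
    (∑ j ∈ s, e j) * e i = e i := by
  classical
  simp [Finset.sum_mul, he.mul_eq, h]

lemma OrthogonalIdempotents.isStarProjection_sum {R I : Type*} [Semiring R] [StarRing R]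
    {e : I → R} (he : OrthogonalIdempotents e) (hsa : ∀ i, IsSelfAdjoint (e i)) (s : Finset I) :
    IsStarProjection (∑ i ∈ s, e i) :=
  ⟨he.isIdempotentElem_sum, isSelfAdjoint_sum s fun i _ => hsa i⟩

section BlockHessenberg

variable {R : Type*} [Ring R] {P : ℕ → R} {N : ℕ}

theorem one_sub_sum_range_eq_sum_Ico (h0 : ∀ k, N < k → P k = 0)
    (h1 : ∑ k ∈ range (N + 1), P k = 1) {n L : ℕ} (hnL : n + 1 ≤ L) (hNL : N + 1 ≤ L) :
    1 - ∑ k ∈ range (n + 1), P k = ∑ k ∈ Ico (n + 1) L, P k := by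
  have hL : ∑ k ∈ range L, P k = 1 := by
    rw [← h1]
    refine (sum_subset (range_subset_range.2 hNL) fun k hk hk' => h0 k ?_).symm
    simp only [mem_range] at hk hk'
    omega
  rw [← hL, ← sum_range_add_sum_Ico _ hnL, add_sub_cancel_left]

theorem sum_Ico_mul_mul_sum_range {D : R} (hD : ∀ i j, j + 1 < i → P i * D * P j = 0)
    {n L : ℕ} (hnL : n + 1 < L) :
    (∑ i ∈ Ico (n + 1) L, P i) * D * ∑ j ∈ range (n + 1), P j = P (n + 1) * D * P n := by
  rw [sum_mul, sum_mul, sum_eq_single_of_mem (n + 1) (by simp [hnL])]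
  · rw [mul_sum, sum_eq_single_of_mem n (self_mem_range_succ n)]
    intro j hj hjn
    exact hD _ _ (by simp only [mem_range] at hj; omega)
  · intro i hi hin
    rw [mul_sum]
    refine sum_eq_zero fun j hj => hD i j ?_
    simp only [mem_Ico, mem_range] at hi hj
    omega

theorem one_sub_sum_range_mul_mul_sum_range (h0 : ∀ k, N < k → P k = 0)
    (h1 : ∑ k ∈ range (N + 1), P k = 1) {D : R} (hD : ∀ i j, j + 1 < i → P i * D * P j = 0)
    (n : ℕ) :
    (1 - ∑ k ∈ range (n + 1), P k) * D * ∑ k ∈ range (n + 1), P k = P (n + 1) * D * P n := by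
  rw [one_sub_sum_range_eq_sum_Ico h0 h1 (L := n + N + 2) (by omega) (by omega),
    sum_Ico_mul_mul_sum_range hD (by omega)]

end BlockHessenberg

section Trace

variable {R ι : Type*} [CommRing R] [Fintype ι] [DecidableEq ι] {Q : Matrix ι ι R}

theorem Matrix.trace_mul_commutator_mul (hQ : IsIdempotentElem Q) (B C : Matrix ι ι R) :
    trace (Q * (B * C - C * B) * Q) =
      trace (Q * B * ((1 - Q) * C * Q)) - trace (Q * C * ((1 - Q) * B * Q)) := by
  have hsplit : Q * (B * C - C * B) * Q =
      (Q * B * Q * C * Q - Q * C * Q * B * Q) +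
        (Q * B * ((1 - Q) * C * Q) - Q * C * ((1 - Q) * B * Q)) := by
    noncomm_ring
  have hcycle (X Y : Matrix ι ι R) : trace (Q * X * Q * Y * Q) = trace ((Q * X) * (Q * Y)) := by
    rw [trace_mul_comm]
    simp only [← mul_assoc, hQ.eq]
  rw [hsplit, trace_add, trace_sub, hcycle, hcycle, trace_mul_comm (Q * B), sub_self, zero_add,
    trace_sub]

theorem Matrix.trace_mul_sub_smul_one_mul (hQ : IsIdempotentElem Q) {E : Matrix ι ι R}
    (hQE : Q * E = E) (hEQ : E * Q = E) (c : R) :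
    trace (Q * (E - c • 1) * Q) = trace E - c * trace Q := by
  rw [mul_sub, sub_mul, hQE, hEQ, Matrix.mul_smul, mul_one, Matrix.smul_mul, hQ.eq, trace_sub,
    trace_smul, smul_eq_mul]

end Trace

/-- Let `A = P₀ - (1/m) I = BC - CB` with `‖B‖ = 1`, where `P₀` is the rank-one projection
onto the first coordinate, and let `(Pₖ)` be the orthogonal projections onto mutually
orthogonal subspaces `Hₖ` spanning `ℂ^m` with `H₀ = range P₀`, satisfying
`Pᵢ B Pⱼ = Pᵢ C Pⱼ = 0` for `i > j + 1`. Then for all `n`,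
`1 - (1/m) ∑_{k≤n} rank Pₖ ≤ ‖P_{n+1} C Pₙ‖₁ + ‖Pₙ C P_{n+1}‖₁`. -/
theorem stmt14 {m : ℕ} (hm : 1 ≤ m)
    (B C : Matrix (Fin m) (Fin m) ℂ)
    (P : ℕ → Matrix (Fin m) (Fin m) ℂ)
    (hP0 : P 0 = Matrix.single (⟨0, by omega⟩ : Fin m) (⟨0, by omega⟩ : Fin m) 1)
    (hproj : ∀ k, (P k).IsHermitian ∧ P k * P k = P k)
    (horth : ∀ i j, i ≠ j → P i * P j = 0)
    (hspan : ∃ N : ℕ, (∀ n, N < n → P n = 0) ∧ ∑ n ∈ Finset.range (N + 1), P n = 1)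
    (hA : P 0 - ((1 : ℂ) / m) • 1 = B * C - C * B)
    (hB : opNorm B = 1)
    (hBzero : ∀ i j, j + 1 < i → P i * B * P j = 0)
    (hCzero : ∀ i j, j + 1 < i → P i * C * P j = 0) :
    ∀ n : ℕ,
      1 - (1 / (m : ℝ)) * ∑ k ∈ Finset.range (n + 1), ((P k).rank : ℝ) ≤
        traceNorm (P (n + 1) * C * P n) + traceNorm (P n * C * P (n + 1)) := by
  intro n
  obtain ⟨N, h0, h1⟩ := hspan
  have hP : OrthogonalIdempotents P := ⟨fun k => (hproj k).2, fun i j => horth i j⟩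
  set Q := ∑ k ∈ range (n + 1), P k
  have hQ : IsStarProjection Q := hP.isStarProjection_sum (fun k => (hproj k).1.isSelfAdjoint) _
  have hPnQ : P n * Q = P n := hP.mul_sum_of_mem (self_mem_range_succ n)
  have hval : trace (Q * (P 0 - ((1 : ℂ) / m) • 1) * Q) =
      ((1 - (1 / (m : ℝ)) * ∑ k ∈ range (n + 1), ((P k).rank : ℝ) : ℝ) : ℂ) := by
    rw [trace_mul_sub_smul_one_mul hQ.isIdempotentElem (hP.sum_mul_of_mem (by simp))
      (hP.mul_sum_of_mem (by simp)), hP0, trace_single_eq_same, trace_sum]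
    simp [trace_eq_rank_of_isIdempotentElem (hproj _).2]
  have hsecond : trace (Q * C * (P (n + 1) * B * P n)) = trace (B * (P n * C * P (n + 1))) := by
    rw [show Q * C * (P (n + 1) * B * P n) = Q * C * P (n + 1) * B * P n by simp only [mul_assoc],
      trace_mul_comm, show P n * (Q * C * P (n + 1) * B) = P n * Q * C * P (n + 1) * B by
        simp only [mul_assoc], hPnQ, trace_mul_comm]
  have hQB : opNorm (Q * B) ≤ 1 :=
    (norm_mul_le Q B).trans (by rw [← opNorm_eq_norm B, hB, mul_one]; exact hQ.norm_le)
  calc 1 - (1 / (m : ℝ)) * ∑ k ∈ range (n + 1), ((P k).rank : ℝ)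
      ≤ ‖trace (Q * (P 0 - ((1 : ℂ) / m) • 1) * Q)‖ := by
        rw [hval, Complex.norm_real]; exact le_abs_self _
    _ = ‖trace (Q * B * (P (n + 1) * C * P n)) - trace (B * (P n * C * P (n + 1)))‖ := by
        rw [hA, trace_mul_commutator_mul hQ.isIdempotentElem,
          one_sub_sum_range_mul_mul_sum_range h0 h1 hCzero,
          one_sub_sum_range_mul_mul_sum_range h0 h1 hBzero, hsecond]
    _ ≤ _ := (norm_sub_le _ _).trans <| add_le_add (norm_trace_mul_le_traceNorm hQB _)
        (norm_trace_mul_le_traceNorm hB.le _)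
end

section
/- Let s₁ ≥ s₂ ≥ … ≥ s_m ≥ 0 satisfy ∑_{i=1}^{l} sᵢ ≥ √l / 6 for every l ≤ m. Then ∑_{i=1}^{m} sᵢ² ≥ c·log m for some absolute constant c > 0. -/
open Finset Real

/-!
The sequence `tᵢ = √(i+1) - √i` is nonnegative and antitone with partial sums `√l`, so the
hypothesis says that the partial sums of `6 s` dominate those of `t`. Summation by parts against
the antitone weights `t` gives `∑ tᵢ² ≤ ∑ 6 tᵢ sᵢ`, and Cauchy–Schwarz then `∑ tᵢ² ≤ 36 ∑ sᵢ²`.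
Finally `tᵢ² ≥ 1 / (4 (i + 1))`, and the harmonic sum is at least `log m`.
-/

section Majorization

variable {R : Type*} [CommRing R] [LinearOrder R] [IsStrictOrderedRing R]

theorem sum_mul_le_sum_mul_of_sum_range_le {u a b : ℕ → R} {m : ℕ} (hu : ∀ i, 0 ≤ u i)
    (hanti : Antitone u) (hab : ∀ l ≤ m, ∑ i ∈ range l, a i ≤ ∑ i ∈ range l, b i) :
    ∑ i ∈ range m, u i * a i ≤ ∑ i ∈ range m, u i * b i := by
  have hd : ∀ l ≤ m, 0 ≤ ∑ i ∈ range l, (b i - a i) := fun l hl => by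
    simpa [sum_sub_distrib] using hab l hl
  suffices 0 ≤ ∑ i ∈ range m, u i * (b i - a i) by
    simpa [mul_sub, sum_sub_distrib] using this
  have hparts := sum_range_by_parts u (fun i => b i - a i) m
  simp only [smul_eq_mul] at hparts
  rw [hparts, sub_nonneg]
  calc ∑ i ∈ range (m - 1), (u (i + 1) - u i) * ∑ j ∈ range (i + 1), (b j - a j)
      ≤ 0 := sum_nonpos fun i hi => mul_nonpos_of_nonpos_of_nonneg
        (sub_nonpos.2 (hanti i.le_succ)) (hd _ (by simp at hi; omega))
    _ ≤ u (m - 1) * ∑ i ∈ range m, (b i - a i) := mul_nonneg (hu _) (hd m le_rfl)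

theorem sum_sq_le_sum_sq_of_sum_range_le [ExistsAddOfLE R] {t x : ℕ → R} {m : ℕ}
    (ht : ∀ i, 0 ≤ t i) (hanti : Antitone t)
    (htx : ∀ l ≤ m, ∑ i ∈ range l, t i ≤ ∑ i ∈ range l, x i) :
    ∑ i ∈ range m, t i ^ 2 ≤ ∑ i ∈ range m, x i ^ 2 := by
  have habel : ∑ i ∈ range m, t i ^ 2 ≤ ∑ i ∈ range m, t i * x i := by
    simpa only [sq] using sum_mul_le_sum_mul_of_sum_range_le ht hanti htx
  have hcs := sum_mul_sq_le_sq_mul_sq (range m) t x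
  have hT : 0 ≤ ∑ i ∈ range m, t i ^ 2 := sum_nonneg fun i _ => sq_nonneg _
  have hS : 0 ≤ ∑ i ∈ range m, x i ^ 2 := sum_nonneg fun i _ => sq_nonneg _
  nlinarith [pow_le_pow_left₀ hT habel 2]

end Majorization

theorem sqrt_add_one_sub_sqrt {x : ℝ} (hx : 0 ≤ x) : √(x + 1) - √x = (√(x + 1) + √x)⁻¹ := by
  refine eq_inv_of_mul_eq_one_left ?_
  rw [mul_comm, ← sq_sub_sq, sq_sqrt (by linarith), sq_sqrt hx]
  ring

theorem inv_four_mul_le_sq_sqrt_add_one_sub_sqrt {x : ℝ} (hx : 0 ≤ x) :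
    (4 * (x + 1))⁻¹ ≤ (√(x + 1) - √x) ^ 2 := by
  have hle : √x ≤ √(x + 1) := sqrt_le_sqrt (by linarith)
  calc (4 * (x + 1))⁻¹ = ((2 * √(x + 1))⁻¹) ^ 2 := by
        rw [inv_pow, mul_pow, sq_sqrt (by linarith)]; norm_num
    _ ≤ (√(x + 1) - √x) ^ 2 := by
        rw [sqrt_add_one_sub_sqrt hx]
        gcongr
        linarith

theorem antitone_sqrt_add_one_sub_sqrt : Antitone fun n : ℕ => √((n : ℝ) + 1) - √n := by
  refine antitone_nat_of_succ_le fun n => ?_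
  rw [Nat.cast_succ, sqrt_add_one_sub_sqrt (by positivity),
    sqrt_add_one_sub_sqrt (by positivity)]
  exact inv_anti₀ (by positivity)
    (add_le_add (sqrt_le_sqrt (by linarith)) (sqrt_le_sqrt (by linarith)))

theorem sum_range_sqrt_add_one_sub_sqrt (l : ℕ) :
    ∑ i ∈ range l, (√((i : ℝ) + 1) - √i) = √l := by
  simpa using sum_range_sub (fun n : ℕ => √(n : ℝ)) l

theorem log_le_sum_range_inv_add_one (m : ℕ) : log m ≤ ∑ i ∈ range m, ((i : ℝ) + 1)⁻¹ := by
  have h := log_add_one_le_harmonic m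
  simp only [harmonic] at h
  push_cast at h
  rcases m.eq_zero_or_pos with rfl | hm
  · simp
  · exact (log_le_log (Nat.cast_pos.2 hm) (by linarith)).trans h

theorem log_le_four_mul_sum_range_sq_sqrt_add_one_sub_sqrt (m : ℕ) :
    log m ≤ 4 * ∑ i ∈ range m, (√((i : ℝ) + 1) - √i) ^ 2 := by
  rw [mul_sum]
  refine (log_le_sum_range_inv_add_one m).trans (sum_le_sum fun i _ => ?_)
  have h := inv_four_mul_le_sq_sqrt_add_one_sub_sqrt (Nat.cast_nonneg (α := ℝ) i)
  rw [mul_inv] at h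
  linarith [inv_pos.2 (Nat.cast_add_one_pos (α := ℝ) i)]

theorem Fin.sum_filter_val_lt_eq_sum_range_extend {M : Type*} [AddCommMonoid M] {m l : ℕ}
    (hl : l ≤ m) (f : Fin m → M) :
    ∑ i ∈ univ.filter (fun i : Fin m => (i : ℕ) < l), f i =
      ∑ i ∈ range l, Function.extend Fin.val f 0 i := by
  have hrange : (univ.filter (fun i : Fin m => (i : ℕ) < l)).map Fin.valEmbedding = range l := by
    ext x
    simp only [mem_map, mem_filter, mem_univ, true_and, Fin.valEmbedding_apply, mem_range]
    exact ⟨fun ⟨i, hi, hix⟩ => hix ▸ hi, fun hx => ⟨⟨x, by omega⟩, hx, rfl⟩⟩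
  rw [← hrange, sum_map]
  simp [Fin.val_injective.extend_apply]

/-- If `s₁ ≥ s₂ ≥ … ≥ s_m ≥ 0` satisfy `∑_{i=1}^l sᵢ ≥ √l / 6` for every `l ≤ m`, then
`∑ᵢ sᵢ² ≥ c log m` for some absolute constant `c > 0`. -/
theorem stmt17 :
    ∃ c : ℝ, 0 < c ∧ ∀ (m : ℕ) (s : Fin m → ℝ),
      Antitone s → (∀ i, 0 ≤ s i) →
      (∀ l : ℕ, l ≤ m →
        Real.sqrt l / 6 ≤ ∑ i ∈ Finset.univ.filter (fun i : Fin m => (i : ℕ) < l), s i) →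
      c * Real.log m ≤ ∑ i, s i ^ 2 := by
  refine ⟨1 / 144, by norm_num, fun m s _ _ hpartial => ?_⟩
  set s' := Function.extend Fin.val s 0
  have hmaj : ∑ i ∈ range m, (√((i : ℝ) + 1) - √i) ^ 2 ≤ ∑ i ∈ range m, (6 * s' i) ^ 2 :=
    sum_sq_le_sum_sq_of_sum_range_le (fun i => sub_nonneg.2 (sqrt_le_sqrt (by linarith)))
      antitone_sqrt_add_one_sub_sqrt fun l hl => by
        rw [sum_range_sqrt_add_one_sub_sqrt, ← mul_sum,
          ← Fin.sum_filter_val_lt_eq_sum_range_extend hl]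
        linarith [hpartial l hl]
  have hs' : ∑ i ∈ range m, s' i ^ 2 = ∑ i, s i ^ 2 := by
    rw [← Fin.sum_univ_eq_sum_range]
    simp [s', Fin.val_injective.extend_apply]
  calc 1 / 144 * log m ≤ 1 / 144 * (4 * ∑ i ∈ range m, (6 * s' i) ^ 2) := by
        gcongr
        exact (log_le_four_mul_sum_range_sq_sqrt_add_one_sub_sqrt m).trans (by linarith)
    _ = ∑ i, s i ^ 2 := by
        simp only [mul_pow, ← mul_sum, hs']
        ring
end

section
/- There is an absolute constant c' such that for every m ≥ 2, ∑_{n : (n+2)(n+1)/2 < m} (1/(2(n+1)))·(1 − (1/m)·binom(n+2,2))² ≥ (1/4)·log m − c'. -/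
/-!
The indices with `binom(n+2,2) < m` form an initial segment `range N`, where `N ~ √(2m)`.
Since `(1 - x)² ≥ 1 - 2x`, each summand is at least `1/(2(n+1)) - (n+2)/(2m)`. The first parts
add up to `harmonic N / 2 ≥ log (N+1) / 2 ≥ log m / 4`, because `m ≤ binom(N+2,2) ≤ (N+1)²`;
the second parts add up to `N(N+3)/(4m) ≤ 1`, because `binom(N+1,2) < m` and `N ≤ m`.
-/

open Finset

lemma Monotone.lt_iff_lt_find {f : ℕ → ℕ} (hf : Monotone f) {m : ℕ} (h : ∃ k, m ≤ f k)
    (n : ℕ) : f n < m ↔ n < Nat.find h := by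
  rw [Nat.lt_find_iff]
  exact ⟨fun hn k hk => not_le.mpr ((hf hk).trans_lt hn), fun hn => not_le.mp (hn n le_rfl)⟩

lemma cast_choose_two_add_two (n : ℕ) :
    (((n + 2).choose 2 : ℕ) : ℝ) = ((n : ℝ) + 1) * ((n : ℝ) + 2) / 2 := by
  rw [Nat.cast_choose_two]; push_cast; ring

lemma le_choose_two_add_two (m : ℕ) : m ≤ (m + 2).choose 2 := by
  have : (m : ℝ) ≤ (((m + 2).choose 2 : ℕ) : ℝ) := by
    rw [cast_choose_two_add_two]; nlinarith [Nat.cast_nonneg (α := ℝ) m]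
  exact_mod_cast this

lemma sub_le_mul_one_sub_choose_two_div_sq (n : ℕ) (m : ℝ) :
    1 / (2 * ((n : ℝ) + 1)) - ((n : ℝ) + 2) / (2 * m) ≤
      1 / (2 * ((n : ℝ) + 1)) * (1 - 1 / m * ((n + 2).choose 2 : ℕ)) ^ 2 := by
  rw [cast_choose_two_add_two]
  set x := 1 / m * (((n : ℝ) + 1) * ((n : ℝ) + 2) / 2) with hx_def
  have hx : 1 / (2 * ((n : ℝ) + 1)) - ((n : ℝ) + 2) / (2 * m) =
      1 / (2 * ((n : ℝ) + 1)) * (1 - 2 * x) := by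
    rw [hx_def]
    field_simp
  rw [hx]
  exact mul_le_mul_of_nonneg_left (by nlinarith [sq_nonneg x]) (by positivity)

lemma sum_range_add_two (N : ℕ) : ∑ n ∈ range N, ((n : ℝ) + 2) = N * (N + 3) / 2 := by
  induction N with
  | zero => simp
  | succ N ih => rw [sum_range_succ, ih]; push_cast; ring

lemma sum_range_add_two_div_le_one {m N : ℕ} (hN : N ≤ m) (hm : (N + 1).choose 2 < m) :
    ∑ n ∈ range N, ((n : ℝ) + 2) / (2 * m) ≤ 1 := by
  have hN' : (N : ℝ) ≤ m := by exact_mod_cast hN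
  have hm' : (((N + 1).choose 2 : ℕ) : ℝ) < m := by exact_mod_cast hm
  rw [Nat.cast_choose_two, Nat.cast_add_one, add_sub_cancel_right] at hm'
  have hm0 : (0 : ℝ) < m := by exact_mod_cast Nat.zero_lt_of_lt hm
  rw [← sum_div, sum_range_add_two, div_le_one (by positivity)]
  nlinarith

lemma sum_range_inv_two_mul_add_one (N : ℕ) :
    ∑ n ∈ range N, 1 / (2 * ((n : ℝ) + 1)) = harmonic N / 2 := by
  simp only [harmonic, Rat.cast_sum, Rat.cast_inv, Rat.cast_natCast, sum_div]
  refine sum_congr rfl fun n _ => ?_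
  push_cast
  field_simp

lemma log_le_two_mul_harmonic {m N : ℕ} (hm : 0 < m) (h : m ≤ (N + 2).choose 2) :
    Real.log m ≤ 2 * harmonic N := by
  have hsq : (m : ℝ) ≤ ((N + 1 : ℕ) : ℝ) ^ 2 := by
    have : (m : ℝ) ≤ (((N + 2).choose 2 : ℕ) : ℝ) := by exact_mod_cast h
    rw [cast_choose_two_add_two] at this
    push_cast
    nlinarith [Nat.cast_nonneg (α := ℝ) N]
  calc Real.log m ≤ Real.log (((N + 1 : ℕ) : ℝ) ^ 2) := Real.log_le_log (by positivity) hsq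
    _ = 2 * Real.log ((N + 1 : ℕ) : ℝ) := by rw [Real.log_pow]; norm_num
    _ ≤ 2 * harmonic N := by gcongr; exact log_add_one_le_harmonic N

/-- There is an absolute constant `c'` such that for all `m ≥ 2`,
`∑_{n : binom(n+2,2) < m} (1/(2(n+1))) (1 - binom(n+2,2)/m)² ≥ (1/4) log m - c'`. -/
theorem stmt19 :
    ∃ c' : ℝ, ∀ m : ℕ, 2 ≤ m →
      (1 / 4) * Real.log m - c' ≤
        ∑ n ∈ (Finset.range m).filter (fun n => (n + 2).choose 2 < m),
          (1 / (2 * ((n : ℝ) + 1))) * (1 - (1 / (m : ℝ)) * ((n + 2).choose 2 : ℕ)) ^ 2 := by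
  refine ⟨1, fun m hm => ?_⟩
  have hex : ∃ k, m ≤ (k + 2).choose 2 := ⟨m, le_choose_two_add_two m⟩
  set N := Nat.find hex
  have hlt : ∀ n, (n + 2).choose 2 < m ↔ n < N :=
    Monotone.lt_iff_lt_find (fun a b hab => Nat.choose_le_choose 2 (by omega)) hex
  have hNm : N ≤ m := Nat.find_min' hex (le_choose_two_add_two m)
  have hS : (range m).filter (fun n => (n + 2).choose 2 < m) = range N := by
    ext n
    simp only [mem_filter, mem_range, hlt]
    omega
  have hlower : (N + 1).choose 2 < m := by
    obtain ⟨K, hK⟩ : ∃ K, N = K + 1 := Nat.exists_eq_add_one.mpr ((hlt 0).mp (by simp; omega))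
    rw [hK]
    exact (hlt K).mpr (by omega)
  have hlog := log_le_two_mul_harmonic (by omega) (Nat.find_spec hex)
  have herr := sum_range_add_two_div_le_one hNm hlower
  rw [hS]
  calc (1 / 4) * Real.log m - 1
      ≤ ∑ n ∈ range N, 1 / (2 * ((n : ℝ) + 1)) - ∑ n ∈ range N, ((n : ℝ) + 2) / (2 * m) := by
        rw [sum_range_inv_two_mul_add_one]; linarith
    _ = ∑ n ∈ range N, (1 / (2 * ((n : ℝ) + 1)) - ((n : ℝ) + 2) / (2 * m)) :=
        (sum_sub_distrib _ _).symm
    _ ≤ _ := sum_le_sum fun n _ => sub_le_mul_one_sub_choose_two_div_sq n m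
end
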